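/- arXiv:1511.02430 — 6 statements merged into one kernel-verified Lean document; each statement's English description precedes it below -/
import Mathlib

section
/- Let j ≥ 1 be an integer and let k₁, k₂ be nonzero real numbers with k₁ + k₂ ≠ 0, and set k = k₁ + k₂. Then |k^{2j+1} − k₁^{2j+1} − k₂^{2j+1}| ≥ (2j+1)·|k|·|k₁|^j·|k₂|^j. -/
open Finset

private lemma pair_bound (j : ℕ) (a b : ℝ) (ha : 0 < a) (hb : 0 < b)
    {p q : ℕ} (hpq : p + q = 2 * j) :
    2 * (a ^ j * (a + b) ^ j) ≤ (a + b) ^ p * a ^ q + (a + b) ^ q * a ^ p := by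
  wlog hle : p ≤ q generalizing p q
  · have h2 := this (p := q) (q := p) (by omega) (by omega)
    linarith
  obtain ⟨e, hjj, hq⟩ : ∃ e, j = p + e ∧ q = p + e + e := ⟨j - p, by omega, by omega⟩
  subst hjj hq
  simp only [pow_add]
  nlinarith [mul_nonneg (mul_nonneg (pow_pos ha p).le (pow_pos (by linarith : (0:ℝ) < a + b) p).le)
    (sq_nonneg ((a+b)^e - a^e))]

private lemma sum_bound (j : ℕ) (hj : 1 ≤ j) (a b : ℝ) (ha : 0 < a) (hb : 0 < b) :
    (2 * (j:ℝ) + 1) * (a ^ j * (a + b) ^ j) + b ^ (2*j) ≤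
      ∑ i ∈ range (2*j+1), (a + b) ^ i * a ^ (2*j - i) := by
  have hab : (0:ℝ) < a + b := by linarith
  set f : ℕ → ℝ := fun i => (a + b) ^ i * a ^ (2*j - i) with hf
  obtain ⟨q, hq⟩ : ∃ q, 2*j = q + 1 := ⟨2*j-1, by omega⟩
  have hsplit : ∑ i ∈ range (2*j+1), f i = f 0 + (∑ i ∈ range q, f (i+1)) + f (q+1) := by
    rw [hq, sum_range_succ, sum_range_succ']
    ring
  -- middle
  have hrefl : ∑ i ∈ range q, f (q - i) = ∑ i ∈ range q, f (i+1) := by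
    have := Finset.sum_range_reflect (fun i => f (i+1)) q
    rw [← this]
    apply Finset.sum_congr rfl
    intro i hi
    simp only [mem_range] at hi
    congr 1
    omega
  have hpairs : ∀ i ∈ range q, 2 * (a ^ j * (a + b) ^ j) ≤ f (i+1) + f (q - i) := by
    intro i hi
    simp only [mem_range] at hi
    have h1 : 2*j - (i+1) = q - i := by omega
    have h2 : 2*j - (q-i) = i+1 := by omega
    simp only [hf, h1, h2]
    exact pair_bound j a b ha hb (by omega)
  have hmid : (q:ℝ) * (2 * (a ^ j * (a + b) ^ j)) ≤ 2 * ∑ i ∈ range q, f (i+1) := by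
    have := Finset.card_nsmul_le_sum (range q) (fun i => f (i+1) + f (q - i))
      (2 * (a ^ j * (a + b) ^ j)) hpairs
    rw [Finset.sum_add_distrib, hrefl, Finset.card_range, nsmul_eq_mul] at this
    linarith
  -- ends
  have hend : 2 * (a ^ j * (a + b) ^ j) + b ^ (2*j) ≤ f 0 + f (q+1) := by
    have h0 : f 0 = a ^ (2*j) := by simp [hf]
    have h1 : f (q+1) = (a+b) ^ (2*j) := by
      simp only [hf, ← hq]
      simp
    rw [h0, h1]
    have hle : a ^ j + b ^ j ≤ (a+b) ^ j := pow_add_pow_le ha.le hb.le (by omega)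
    have hsq : (b ^ j)^2 ≤ ((a+b)^j - a^j)^2 := by
      have h2 : (0:ℝ) ≤ b ^ j := (pow_pos hb j).le
      nlinarith [pow_pos ha j, pow_pos hb j]
    have e1 : a ^ (2*j) = (a^j)^2 := by rw [two_mul, pow_add, sq]
    have e2 : (a+b) ^ (2*j) = ((a+b)^j)^2 := by rw [two_mul, pow_add, sq]
    have e3 : b ^ (2*j) = (b^j)^2 := by rw [two_mul, pow_add, sq]
    rw [e1, e2, e3]
    nlinarith []
  have hcast : (2*(j:ℝ)+1) = (q:ℝ) + 2 := by
    have : (2*j : ℕ) = q + 1 := hq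
    have := congrArg (Nat.cast : ℕ → ℝ) this
    push_cast at this
    linarith
  rw [hsplit, hcast]
  linarith

private lemma key (j : ℕ) (hj : 1 ≤ j) (a b : ℝ) (ha : 0 < a) (hb : 0 < b) :
    (2*(j:ℝ)+1) * b * (a^j * (a+b)^j) ≤ (a+b)^(2*j+1) - a^(2*j+1) - b^(2*j+1) := by
  have geom := geom_sum₂_mul (a+b) a (2*j+1)
  have hsub : ∀ i ∈ range (2*j+1), (a+b) ^ i * a ^ (2*j+1-1-i) = (a+b)^i * a^(2*j-i) := by
    intro i _; congr 2 <;> omega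
  rw [Finset.sum_congr rfl hsub, show a + b - a = b by ring] at geom
  have hs := sum_bound j hj a b ha hb
  have hmul := mul_le_mul_of_nonneg_right hs hb.le
  have hb2 : b^(2*j+1) = b^(2*j) * b := by rw [pow_succ]
  nlinarith [hmul, geom]

private lemma case_pos (j : ℕ) (hj : 1 ≤ j) (x y : ℝ) (hx : 0 < x) (hy : 0 < y) :
    (2*(j:ℝ)+1) * (x+y) * x^j * y^j ≤ (x+y)^(2*j+1) - x^(2*j+1) - y^(2*j+1) := by
  have hk := key j hj x y hx hy
  obtain ⟨p, rfl⟩ : ∃ p, j = p+1 := ⟨j-1, by omega⟩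
  have h1 : y^p ≤ (x+y)^p := pow_le_pow_left₀ hy.le (by linarith) p
  calc (2*(↑(p+1):ℝ)+1) * (x+y) * x^(p+1) * y^(p+1)
      = ((2*(↑(p+1):ℝ)+1) * y * x^(p+1) * (x+y)) * y^p := by push_cast; ring
    _ ≤ ((2*(↑(p+1):ℝ)+1) * y * x^(p+1) * (x+y)) * (x+y)^p := by
        apply mul_le_mul_of_nonneg_left h1; positivity
    _ = (2*(↑(p+1):ℝ)+1) * y * (x^(p+1) * (x+y)^(p+1)) := by ring
    _ ≤ _ := hk

private lemma case_mixed (j : ℕ) (hj : 1 ≤ j) (x y : ℝ) (hx : 0 < x) (hy : y < 0)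
    (hxy : 0 < x + y) :
    (2*(j:ℝ)+1) * (x+y) * x^j * (-y)^j ≤ -((x+y)^(2*j+1) - x^(2*j+1) - y^(2*j+1)) := by
  have hk := key j hj (-y) (x+y) (by linarith) hxy
  rw [show -y + (x+y) = x by ring] at hk
  have hodd : Odd (2*j+1) := ⟨j, by ring⟩
  rw [hodd.neg_pow] at hk
  have e : (2*(j:ℝ)+1) * (x+y) * x^j * (-y)^j = (2*(j:ℝ)+1) * (x+y) * ((-y)^j * x^j) := by ring
  rw [e]
  linarith



/-- **Resonance lower bound (Lemma 2.7, lower bound part).**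
For an integer `j ≥ 1` and nonzero reals `k₁, k₂` with `k = k₁ + k₂ ≠ 0`,
`|k^{2j+1} − k₁^{2j+1} − k₂^{2j+1}| ≥ (2j+1)·|k|·|k₁|^j·|k₂|^j`. -/
theorem stmt_0 (j : ℕ) (hj : 1 ≤ j) (k₁ k₂ : ℝ) (hk₁ : k₁ ≠ 0) (hk₂ : k₂ ≠ 0)
    (hk : k₁ + k₂ ≠ 0) :
    (2 * (j : ℝ) + 1) * |k₁ + k₂| * |k₁| ^ j * |k₂| ^ j ≤
      |(k₁ + k₂) ^ (2 * j + 1) - k₁ ^ (2 * j + 1) - k₂ ^ (2 * j + 1)| := by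
  have hodd : Odd (2*j+1) := ⟨j, by ring⟩
  rcases hk₁.lt_or_gt with h1 | h1
  · rcases hk₂.lt_or_gt with h2 | h2
    · -- both negative
      have hkn : k₁ + k₂ < 0 := by linarith
      rw [abs_of_neg hkn, abs_of_neg h1, abs_of_neg h2]
      have hc := case_pos j hj (-k₁) (-k₂) (by linarith) (by linarith)
      rw [show -k₁ + -k₂ = -(k₁+k₂) by ring, hodd.neg_pow, hodd.neg_pow, hodd.neg_pow] at hc
      calc (2*(j:ℝ)+1) * -(k₁+k₂) * (-k₁)^j * (-k₂)^j
          = (2*(j:ℝ)+1) * -(k₁+k₂) * (-k₁)^j * (-k₂)^j := by ring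
        _ ≤ -(k₁+k₂)^(2*j+1) - -k₁^(2*j+1) - -k₂^(2*j+1) := hc
        _ = -((k₁+k₂)^(2*j+1) - k₁^(2*j+1) - k₂^(2*j+1)) := by ring
        _ ≤ _ := neg_le_abs _
    · -- k₁ < 0 < k₂
      rcases hk.lt_or_gt with hs | hs
      · -- sum negative: use case_mixed on (-k₁, -k₂)
        rw [abs_of_neg hs, abs_of_neg h1, abs_of_pos h2]
        have hc := case_mixed j hj (-k₁) (-k₂) (by linarith) (by linarith) (by linarith)
        rw [show -k₁ + -k₂ = -(k₁+k₂) by ring, hodd.neg_pow, hodd.neg_pow, hodd.neg_pow,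
          neg_neg] at hc
        calc (2*(j:ℝ)+1) * -(k₁+k₂) * (-k₁)^j * k₂^j
            = (2*(j:ℝ)+1) * (-(k₁+k₂)) * (-k₁)^j * k₂^j := by ring
          _ ≤ -(-(k₁+k₂)^(2*j+1) - -k₁^(2*j+1) - -k₂^(2*j+1)) := hc
          _ = (k₁+k₂)^(2*j+1) - k₁^(2*j+1) - k₂^(2*j+1) := by ring
          _ ≤ _ := le_abs_self _
      · -- sum positive: case_mixed on (k₂, k₁)
        rw [abs_of_pos hs, abs_of_neg h1, abs_of_pos h2]
        have hc := case_mixed j hj k₂ k₁ h2 h1 (by linarith)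
        rw [show k₂ + k₁ = k₁ + k₂ by ring] at hc
        calc (2*(j:ℝ)+1) * (k₁+k₂) * (-k₁)^j * k₂^j
            = (2*(j:ℝ)+1) * (k₁+k₂) * k₂^j * (-k₁)^j := by ring
          _ ≤ -((k₁+k₂)^(2*j+1) - k₂^(2*j+1) - k₁^(2*j+1)) := hc
          _ = -((k₁+k₂)^(2*j+1) - k₁^(2*j+1) - k₂^(2*j+1)) := by ring
          _ ≤ _ := neg_le_abs _
  · rcases hk₂.lt_or_gt with h2 | h2
    · -- k₂ < 0 < k₁
      rcases hk.lt_or_gt with hs | hs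
      · -- sum negative: case_mixed on (-k₂, -k₁)
        rw [abs_of_neg hs, abs_of_pos h1, abs_of_neg h2]
        have hc := case_mixed j hj (-k₂) (-k₁) (by linarith) (by linarith) (by linarith)
        rw [show -k₂ + -k₁ = -(k₁+k₂) by ring, hodd.neg_pow, hodd.neg_pow, hodd.neg_pow,
          neg_neg] at hc
        calc (2*(j:ℝ)+1) * -(k₁+k₂) * k₁^j * (-k₂)^j
            = (2*(j:ℝ)+1) * (-(k₁+k₂)) * (-k₂)^j * k₁^j := by ring
          _ ≤ -(-(k₁+k₂)^(2*j+1) - -k₂^(2*j+1) - -k₁^(2*j+1)) := hc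
          _ = (k₁+k₂)^(2*j+1) - k₁^(2*j+1) - k₂^(2*j+1) := by ring
          _ ≤ _ := le_abs_self _
      · -- sum positive: case_mixed on (k₁, k₂)
        rw [abs_of_pos hs, abs_of_pos h1, abs_of_neg h2]
        have hc := case_mixed j hj k₁ k₂ h1 h2 hs
        calc (2*(j:ℝ)+1) * (k₁+k₂) * k₁^j * (-k₂)^j
            ≤ -((k₁+k₂)^(2*j+1) - k₁^(2*j+1) - k₂^(2*j+1)) := hc
          _ ≤ _ := neg_le_abs _
    · -- both positive
      have hkp : 0 < k₁ + k₂ := by linarith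
      rw [abs_of_pos hkp, abs_of_pos h1, abs_of_pos h2]
      exact le_trans (case_pos j hj k₁ k₂ h1 h2) (le_abs_self _)
end

section
/- Let j ≥ 1 be an integer, let k₁, k₂ be nonzero real numbers with k = k₁ + k₂ ≠ 0, let τ₁, τ₂ ∈ ℝ and τ = τ₁ + τ₂. Set σ = τ − k^{2j+1}, σ₁ = τ₁ − k₁^{2j+1}, σ₂ = τ₂ − k₂^{2j+1}. Then 3·max{|σ|, |σ₁|, |σ₂|} ≥ |σ − σ₁ − σ₂| = |k^{2j+1} − k₁^{2j+1} − k₂^{2j+1}| ≥ (2j+1)·|k|·|k₁|^j·|k₂|^j. -/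
/-!
The first two claims are the triangle inequality and the identity
`σ - σ₁ - σ₂ = -(k^{2j+1} - k₁^{2j+1} - k₂^{2j+1})`. For the resonance bound, since `2j+1` is
odd one may assume `k ≥ 0` and `k₂ ≤ k₁`, so `k₁ ≥ 0`. If also `k₂ ≥ 0`, the binomial expansion
of `(k₁ + k₂)^{2j+1} - k₁^{2j+1} - k₂^{2j+1}` dominates, coefficient by coefficient, that of
`(2j+1) k₁ k₂^j (k₁ + k₂)^j`, because `(2j+1) C(j,m) ≤ C(2j+1, m+1)` (a consequence of
Vandermonde's identity). If `k₂ < 0`, the same bound for the pair `(k, -k₂)`, whose sum is `k₁`, gives the claim.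
-/

open Finset

namespace Nat

theorem choose_le_choose_mul_choose_sub (n : ℕ) {m i : ℕ} (hi : i ≤ m) :
    n.choose m ≤ n.choose i * n.choose (m - i) :=
  calc n.choose m ≤ n.choose m * m.choose i := Nat.le_mul_of_pos_right _ (choose_pos hi)
    _ = n.choose i * (n - i).choose (m - i) := choose_mul hi
    _ ≤ n.choose i * n.choose (m - i) :=
        Nat.mul_le_mul_left _ (choose_le_choose _ (sub_le _ _))

theorem add_one_mul_choose_le_choose_two_mul (n m : ℕ) :
    (m + 1) * n.choose m ≤ (2 * n).choose m := by
  rw [two_mul, add_choose_eq, Finset.Nat.sum_antidiagonal_eq_sum_range_succ_mk]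
  calc (m + 1) * n.choose m = ∑ _i ∈ range (m + 1), n.choose m := by simp
    _ ≤ ∑ i ∈ range (m + 1), n.choose i * n.choose (m - i) :=
        sum_le_sum fun i hi => choose_le_choose_mul_choose_sub n (mem_range_succ_iff.mp hi)

theorem two_mul_add_one_mul_choose_le_choose (n m : ℕ) :
    (2 * n + 1) * n.choose m ≤ (2 * n + 1).choose (m + 1) := by
  refine Nat.le_of_mul_le_mul_right ?_ m.succ_pos
  calc (2 * n + 1) * n.choose m * (m + 1) = (2 * n + 1) * ((m + 1) * n.choose m) := by ring
    _ ≤ (2 * n + 1) * (2 * n).choose m :=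
        Nat.mul_le_mul_left _ (add_one_mul_choose_le_choose_two_mul n m)
    _ = (2 * n + 1).choose (m + 1) * (m + 1) := add_one_mul_choose_eq _ _

end Nat

theorem add_pow_sub_pow_sub_pow_eq_sum {R : Type*} [CommRing R] (x y : R) (j : ℕ) :
    (x + y) ^ (2 * j + 1) - x ^ (2 * j + 1) - y ^ (2 * j + 1) =
      ∑ i ∈ range (2 * j), x ^ (i + 1) * y ^ (2 * j - i) * ((2 * j + 1).choose (i + 1) : R) := by
  rw [add_pow, sum_range_succ, sum_range_succ']
  simp

section OrderedRing

variable {R : Type*} [CommRing R] [LinearOrder R] [IsStrictOrderedRing R]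

theorem mul_pow_mul_add_pow_le_add_pow_sub_pow_sub_pow {x y : R} (hx : 0 ≤ x) (hy : 0 ≤ y)
    {j : ℕ} (hj : 1 ≤ j) :
    (2 * (j : R) + 1) * x * y ^ j * (x + y) ^ j ≤
      (x + y) ^ (2 * j + 1) - x ^ (2 * j + 1) - y ^ (2 * j + 1) := by
  rw [add_pow_sub_pow_sub_pow_eq_sum, add_pow, mul_sum]
  calc ∑ m ∈ range (j + 1), (2 * (j : R) + 1) * x * y ^ j * (x ^ m * y ^ (j - m) * j.choose m)
      ≤ ∑ m ∈ range (j + 1), x ^ (m + 1) * y ^ (2 * j - m) * ((2 * j + 1).choose (m + 1) : R) := by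
        refine sum_le_sum fun m hm => ?_
        have hmj : j + (j - m) = 2 * j - m := by have := mem_range_succ_iff.mp hm; omega
        have hcoeff := Nat.mono_cast (α := R) (Nat.two_mul_add_one_mul_choose_le_choose j m)
        push_cast at hcoeff
        calc (2 * (j : R) + 1) * x * y ^ j * (x ^ m * y ^ (j - m) * j.choose m)
            = x ^ (m + 1) * y ^ (2 * j - m) * ((2 * j + 1) * j.choose m : R) := by
              rw [← hmj, pow_add, pow_succ]; ring
          _ ≤ _ := by gcongr
    _ ≤ _ := by
        refine sum_le_sum_of_subset_of_nonneg (range_subset_range.mpr (by omega)) ?_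
        intros
        positivity

theorem mul_add_mul_pow_mul_pow_le_add_pow_sub_pow_sub_pow {x y : R} (hx : 0 ≤ x) (hy : 0 ≤ y)
    {j : ℕ} (hj : 1 ≤ j) :
    (2 * (j : R) + 1) * (x + y) * x ^ j * y ^ j ≤
      (x + y) ^ (2 * j + 1) - x ^ (2 * j + 1) - y ^ (2 * j + 1) := by
  obtain ⟨i, rfl⟩ : ∃ i, j = i + 1 := ⟨j - 1, by omega⟩
  have hxy : 0 ≤ x + y := add_nonneg hx hy
  refine le_trans ?_ (mul_pow_mul_add_pow_le_add_pow_sub_pow_sub_pow hx hy hj)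
  calc (2 * ((i + 1 : ℕ) : R) + 1) * (x + y) * x ^ (i + 1) * y ^ (i + 1)
      = (2 * ((i + 1 : ℕ) : R) + 1) * x * y ^ (i + 1) * (x ^ i * (x + y)) := by ring
    _ ≤ (2 * ((i + 1 : ℕ) : R) + 1) * x * y ^ (i + 1) * ((x + y) ^ i * (x + y)) := by
        gcongr
        exact le_add_of_nonneg_right hy
    _ = _ := by rw [← pow_succ]

theorem mul_abs_add_mul_pow_mul_pow_le_abs_add_pow_sub_pow_sub_pow {j : ℕ} (hj : 1 ≤ j)
    (a b : R) :
    (2 * (j : R) + 1) * |a + b| * |a| ^ j * |b| ^ j ≤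
      |(a + b) ^ (2 * j + 1) - a ^ (2 * j + 1) - b ^ (2 * j + 1)| := by
  have hodd : Odd (2 * j + 1) := odd_two_mul_add_one j
  wlog hab : 0 ≤ a + b generalizing a b
  · have := this (-a) (-b) (by rw [← neg_add]; exact neg_nonneg.2 (le_of_not_ge hab))
    rw [← neg_add, hodd.neg_pow, hodd.neg_pow, hodd.neg_pow, abs_neg, abs_neg, abs_neg] at this
    refine this.trans_eq ?_
    rw [← abs_neg]
    congr 1
    ring
  wlog hba : b ≤ a generalizing a b
  · have := this b a (by rwa [add_comm]) (le_of_not_ge hba)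
    rwa [add_comm b a, sub_right_comm, mul_right_comm _ (|b| ^ j)] at this
  have ha : 0 ≤ a := by linarith
  rcases le_or_gt 0 b with hb | hb
  · rw [abs_of_nonneg hab, abs_of_nonneg ha, abs_of_nonneg hb]
    exact (mul_add_mul_pow_mul_pow_le_add_pow_sub_pow_sub_pow ha hb hj).trans (le_abs_self _)
  · have key := mul_pow_mul_add_pow_le_add_pow_sub_pow_sub_pow hab (neg_nonneg.2 hb.le) hj
    rw [add_neg_cancel_right, hodd.neg_pow] at key
    rw [abs_of_nonneg hab, abs_of_nonneg ha, abs_of_neg hb]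
    calc (2 * (j : R) + 1) * (a + b) * a ^ j * (-b) ^ j
        = (2 * (j : R) + 1) * (a + b) * (-b) ^ j * a ^ j := by ring
      _ ≤ a ^ (2 * j + 1) - (a + b) ^ (2 * j + 1) - -b ^ (2 * j + 1) := key
      _ = -((a + b) ^ (2 * j + 1) - a ^ (2 * j + 1) - b ^ (2 * j + 1)) := by ring
      _ ≤ _ := neg_le_abs _

end OrderedRing

theorem abs_sub_sub_le_three_mul_max {α : Type*} [Ring α] [LinearOrder α] [IsOrderedRing α]
    (a b c : α) : |a - b - c| ≤ 3 * max |a| (max |b| |c|) :=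
  calc |a - b - c| ≤ |a| + |b| + |c| := (abs_sub _ c).trans (by gcongr; exact abs_sub a b)
    _ ≤ max |a| (max |b| |c|) + max |a| (max |b| |c|) + max |a| (max |b| |c|) := by
        gcongr
        exacts [le_max_left _ _, (le_max_left _ _).trans (le_max_right _ _),
          (le_max_right _ _).trans (le_max_right _ _)]
    _ = 3 * max |a| (max |b| |c|) := by noncomm_ring

theorem stmt_1_general (j : ℕ) (hj : 1 ≤ j) (k₁ k₂ τ₁ τ₂ : ℝ) :
    |((τ₁ + τ₂) - (k₁ + k₂) ^ (2 * j + 1)) - (τ₁ - k₁ ^ (2 * j + 1)) -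
        (τ₂ - k₂ ^ (2 * j + 1))| ≤
      3 * max |(τ₁ + τ₂) - (k₁ + k₂) ^ (2 * j + 1)|
          (max |τ₁ - k₁ ^ (2 * j + 1)| |τ₂ - k₂ ^ (2 * j + 1)|) ∧
    |((τ₁ + τ₂) - (k₁ + k₂) ^ (2 * j + 1)) - (τ₁ - k₁ ^ (2 * j + 1)) -
        (τ₂ - k₂ ^ (2 * j + 1))| =
      |(k₁ + k₂) ^ (2 * j + 1) - k₁ ^ (2 * j + 1) - k₂ ^ (2 * j + 1)| ∧
    (2 * (j : ℝ) + 1) * |k₁ + k₂| * |k₁| ^ j * |k₂| ^ j ≤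
      |(k₁ + k₂) ^ (2 * j + 1) - k₁ ^ (2 * j + 1) - k₂ ^ (2 * j + 1)| := by
  refine ⟨abs_sub_sub_le_three_mul_max _ _ _, ?_,
    mul_abs_add_mul_pow_mul_pow_le_abs_add_pow_sub_pow_sub_pow hj k₁ k₂⟩
  rw [← abs_neg]
  congr 1
  ring

/-- **Lemma 2.7.** For an integer `j ≥ 1`, nonzero reals `k₁, k₂` with `k = k₁ + k₂ ≠ 0`,
and reals `τ₁, τ₂` with `τ = τ₁ + τ₂`, the modulations `σ = τ − k^{2j+1}`,
`σᵢ = τᵢ − kᵢ^{2j+1}` satisfy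
`3·max{|σ|,|σ₁|,|σ₂|} ≥ |σ − σ₁ − σ₂| = |k^{2j+1} − k₁^{2j+1} − k₂^{2j+1}|
  ≥ (2j+1)·|k|·|k₁|^j·|k₂|^j`. -/
theorem stmt_1 (j : ℕ) (hj : 1 ≤ j) (k₁ k₂ τ₁ τ₂ : ℝ) (hk₁ : k₁ ≠ 0) (hk₂ : k₂ ≠ 0)
    (hk : k₁ + k₂ ≠ 0) :
    |((τ₁ + τ₂) - (k₁ + k₂) ^ (2 * j + 1)) - (τ₁ - k₁ ^ (2 * j + 1)) -
        (τ₂ - k₂ ^ (2 * j + 1))| ≤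
      3 * max |(τ₁ + τ₂) - (k₁ + k₂) ^ (2 * j + 1)|
          (max |τ₁ - k₁ ^ (2 * j + 1)| |τ₂ - k₂ ^ (2 * j + 1)|) ∧
    |((τ₁ + τ₂) - (k₁ + k₂) ^ (2 * j + 1)) - (τ₁ - k₁ ^ (2 * j + 1)) -
        (τ₂ - k₂ ^ (2 * j + 1))| =
      |(k₁ + k₂) ^ (2 * j + 1) - k₁ ^ (2 * j + 1) - k₂ ^ (2 * j + 1)| ∧
    (2 * (j : ℝ) + 1) * |k₁ + k₂| * |k₁| ^ j * |k₂| ^ j ≤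
      |(k₁ + k₂) ^ (2 * j + 1) - k₁ ^ (2 * j + 1) - k₂ ^ (2 * j + 1)| :=
  stmt_1_general j hj k₁ k₂ τ₁ τ₂
end

section
/- Let j ≥ 1 be an integer and let k₁, k₂ be nonzero real numbers with k₁ + k₂ ≠ 0. Then k₁^{2j+1} + k₂^{2j+1} ≠ (k₁ + k₂)^{2j+1}. -/
/-- For positive reals and exponent at least 2, `(a+b)^n` strictly dominates `a^n + b^n`. -/
lemma key_pow_add (a b : ℝ) (ha : 0 < a) (hb : 0 < b) (n : ℕ) (hn : 2 ≤ n) :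
    a ^ n + b ^ n < (a + b) ^ n := by
  have hab : 0 < a + b := by linarith
  obtain ⟨m, rfl⟩ : ∃ m, n = m + 1 := ⟨n - 1, by omega⟩
  have hm : m ≠ 0 := by omega
  have h1 : a ^ m < (a + b) ^ m := pow_lt_pow_left₀ (by linarith) ha.le hm
  have h2 : b ^ m < (a + b) ^ m := pow_lt_pow_left₀ (by linarith) hb.le hm
  calc a ^ (m + 1) + b ^ (m + 1) = a * a ^ m + b * b ^ m := by ring
    _ < a * (a + b) ^ m + b * (a + b) ^ m := by
        have := mul_lt_mul_of_pos_left h1 ha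
        have := mul_lt_mul_of_pos_left h2 hb
        linarith
    _ = (a + b) ^ (m + 1) := by ring

/-- **Nonvanishing of the resonance function.** For an integer `j ≥ 1` and nonzero
reals `k₁, k₂` with `k₁ + k₂ ≠ 0`, one has `k₁^{2j+1} + k₂^{2j+1} ≠ (k₁+k₂)^{2j+1}`. -/
theorem stmt_2 (j : ℕ) (hj : 1 ≤ j) (k₁ k₂ : ℝ) (hk₁ : k₁ ≠ 0) (hk₂ : k₂ ≠ 0)
    (hk : k₁ + k₂ ≠ 0) :
    k₁ ^ (2 * j + 1) + k₂ ^ (2 * j + 1) ≠ (k₁ + k₂) ^ (2 * j + 1) := by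
  set n := 2 * j + 1 with hn
  have hn2 : 2 ≤ n := by omega
  have hodd : Odd n := ⟨j, by omega⟩
  have negpow : ∀ x : ℝ, (-x) ^ n = -(x ^ n) := fun x => hodd.neg_pow x
  rcases hk₁.lt_or_gt with h1 | h1 <;> rcases hk₂.lt_or_gt with h2 | h2
  · -- both negative
    have := key_pow_add (-k₁) (-k₂) (by linarith) (by linarith) n hn2
    rw [negpow, negpow, show -k₁ + -k₂ = -(k₁ + k₂) by ring, negpow] at this
    intro h; linarith
  · -- k₁ < 0 < k₂
    rcases hk.lt_or_gt with hs | hs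
    · have := key_pow_add (-(k₁ + k₂)) k₂ (by linarith) h2 n hn2
      rw [negpow, show -(k₁ + k₂) + k₂ = -k₁ by ring, negpow] at this
      intro h; linarith
    · have := key_pow_add (k₁ + k₂) (-k₁) hs (by linarith) n hn2
      rw [negpow, show k₁ + k₂ + -k₁ = k₂ by ring] at this
      intro h; linarith
  · -- k₂ < 0 < k₁
    rcases hk.lt_or_gt with hs | hs
    · have := key_pow_add (-(k₁ + k₂)) k₁ (by linarith) h1 n hn2
      rw [negpow, show -(k₁ + k₂) + k₁ = -k₂ by ring, negpow] at this
      intro h; linarith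
    · have := key_pow_add (k₁ + k₂) (-k₂) hs (by linarith) n hn2
      rw [negpow, show k₁ + k₂ + -k₂ = k₁ by ring] at this
      intro h; linarith
  · -- both positive
    have := key_pow_add k₁ k₂ h1 h2 n hn2
    intro h; linarith
end

section
/- Let j ≥ 2 be an integer and let s ∈ ℝ satisfy −j + 1/2 ≤ s ≤ −j/2. There exists a constant C > 0 depending only on j and s such that for every λ ≥ 1 and every nonnegative measurable f : Ż_λ × ℝ → [0,∞], the X^{s,1/(2j)} norm of f is at most C times the Z^s norm of f. -/
open MeasureTheory
open scoped ENNReal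

noncomputable section

/-- Japanese bracket `⟨x⟩ = (1+x²)^{1/2}`. -/
def jap (x : ℝ) : ℝ := Real.sqrt (1 + x ^ 2)

/-- Modulation `σ = τ − k^{2j+1}` at the frequency `k = m/λ ∈ Ż_λ`. -/
def sigL (j : ℕ) (lam : ℝ) (m : ℤ) (τ : ℝ) : ℝ := τ - ((m : ℝ) / lam) ^ (2 * j + 1)

/-- Convolution on `Ż_λ × ℝ` (frequencies indexed by `m ∈ ℤ∖{0}`, `k = m/λ`):
`(f∗g)(k,τ) = (1/λ)Σ_{k₁≠0, k−k₁≠0} ∫ f(k₁,τ₁) g(k−k₁,τ−τ₁) dτ₁`. -/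
def convL (lam : ℝ) (f g : ℤ → ℝ → ℝ≥0∞) (m : ℤ) (τ : ℝ) : ℝ≥0∞ :=
  ENNReal.ofReal (1 / lam) *
    ∑' m₁ : ℤ, if m₁ ≠ 0 ∧ m - m₁ ≠ 0 then ∫⁻ τ₁, f m₁ τ₁ * g (m - m₁) (τ - τ₁) else 0

/-- `L²_λ` norm: `((1/λ) Σ_k ∫ f(k,τ)² dτ)^{1/2}`. -/
def L2L (lam : ℝ) (f : ℤ → ℝ → ℝ≥0∞) : ℝ≥0∞ :=
  (ENNReal.ofReal (1 / lam) * ∑' m : ℤ, ∫⁻ τ, (f m τ) ^ 2) ^ (1 / 2 : ℝ)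

/-- `X^{s,b}` norm: the `L²_λ` norm of `⟨k⟩^s ⟨σ⟩^b f(k,τ)`. -/
def Xn (j : ℕ) (lam s b : ℝ) (f : ℤ → ℝ → ℝ≥0∞) : ℝ≥0∞ :=
  L2L lam (fun m τ =>
    ENNReal.ofReal (jap ((m : ℝ) / lam) ^ s * jap (sigL j lam m τ) ^ b) * f m τ)

/-- `Y^s` norm: `((1/λ) Σ_k ⟨k⟩^{2s} (∫ f(k,τ) dτ)²)^{1/2}`. -/
def Yn (lam s : ℝ) (f : ℤ → ℝ → ℝ≥0∞) : ℝ≥0∞ :=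
  (ENNReal.ofReal (1 / lam) *
    ∑' m : ℤ, ENNReal.ofReal (jap ((m : ℝ) / lam) ^ (2 * s)) * (∫⁻ τ, f m τ) ^ 2) ^
    (1 / 2 : ℝ)

/-- `D₁ = {(k,τ): |k| ≥ 1, |σ| ≤ (2(2j+1)/3)|k|^{2j}}`. -/
def D1 (j : ℕ) (lam : ℝ) : Set (ℤ × ℝ) :=
  {p | 1 ≤ |(p.1 : ℝ) / lam| ∧
    |sigL j lam p.1 p.2| ≤ 2 * (2 * (j : ℝ) + 1) / 3 * |(p.1 : ℝ) / lam| ^ (2 * j)}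

/-- `D₂ = {(k,τ): |k| ≥ 1, (2(2j+1)/3)|k|^{2j} < |σ| ≤ 2(2j+1)|k|^{2j+1}}`. -/
def D2 (j : ℕ) (lam : ℝ) : Set (ℤ × ℝ) :=
  {p | 1 ≤ |(p.1 : ℝ) / lam| ∧
    2 * (2 * (j : ℝ) + 1) / 3 * |(p.1 : ℝ) / lam| ^ (2 * j) < |sigL j lam p.1 p.2| ∧
    |sigL j lam p.1 p.2| ≤ 2 * (2 * (j : ℝ) + 1) * |(p.1 : ℝ) / lam| ^ (2 * j + 1)}

/-- `D₃ = {(k,τ): |k| ≥ 1, |σ| > 2(2j+1)|k|^{2j+1}}`. -/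
def D3 (j : ℕ) (lam : ℝ) : Set (ℤ × ℝ) :=
  {p | 1 ≤ |(p.1 : ℝ) / lam| ∧
    2 * (2 * (j : ℝ) + 1) * |(p.1 : ℝ) / lam| ^ (2 * j + 1) < |sigL j lam p.1 p.2|}

/-- `D₄ = {(k,τ): 1/λ ≤ |k| ≤ 1, |σ| > 2(2j+1)|k|^{2j+1}}`. -/
def D4 (j : ℕ) (lam : ℝ) : Set (ℤ × ℝ) :=
  {p | 1 / lam ≤ |(p.1 : ℝ) / lam| ∧ |(p.1 : ℝ) / lam| ≤ 1 ∧
    2 * (2 * (j : ℝ) + 1) * |(p.1 : ℝ) / lam| ^ (2 * j + 1) < |sigL j lam p.1 p.2|}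

/-- `D₅ = {(k,τ): 1/λ ≤ |k| ≤ 1, |σ| ≤ 2(2j+1)|k|^{2j+1}}`. -/
def D5 (j : ℕ) (lam : ℝ) : Set (ℤ × ℝ) :=
  {p | 1 / lam ≤ |(p.1 : ℝ) / lam| ∧ |(p.1 : ℝ) / lam| ≤ 1 ∧
    |sigL j lam p.1 p.2| ≤ 2 * (2 * (j : ℝ) + 1) * |(p.1 : ℝ) / lam| ^ (2 * j + 1)}

/-- Restriction `1_D f` of `f` to a region `D`. -/
def restr (D : Set (ℤ × ℝ)) (f : ℤ → ℝ → ℝ≥0∞) : ℤ → ℝ → ℝ≥0∞ :=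
  fun m τ => Set.indicator D (fun p => f p.1 p.2) (m, τ)

/-- `X^s` norm: `‖1_{D₁∪D₅}f‖_{X^{s,(2j−1)/(2j)}} + ‖1_{D₂}f‖_{X^{(1−2j)s−1,s+1}}
  + ‖1_{D₃∪D₄}f‖_{X^{−s/j−1,s/j+1}}`. -/
def XSn (j : ℕ) (lam s : ℝ) (f : ℤ → ℝ → ℝ≥0∞) : ℝ≥0∞ :=
  Xn j lam s ((2 * (j : ℝ) - 1) / (2 * (j : ℝ))) (restr (D1 j lam ∪ D5 j lam) f)
  + Xn j lam ((1 - 2 * (j : ℝ)) * s - 1) (s + 1) (restr (D2 j lam) f)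
  + Xn j lam (-s / (j : ℝ) - 1) (s / (j : ℝ) + 1) (restr (D3 j lam ∪ D4 j lam) f)

/-- `Z^s` norm: `X^s` norm plus `Y^s` norm. -/
def Zn (j : ℕ) (lam s : ℝ) (f : ℤ → ℝ → ℝ≥0∞) : ℝ≥0∞ :=
  XSn j lam s f + Yn lam s f

/-!
On `D₁ ∪ D₅` and `D₃ ∪ D₄` the weight `⟨k⟩^s ⟨σ⟩^{1/(2j)}` is pointwise below the weight of
the corresponding piece of the `X^s` norm, simply because `⟨·⟩ ≥ 1` and both exponents
increase (this is where `-j + 1/2 ≤ s ≤ -j/2` enters). On `D₂` we have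
`⟨σ⟩ ≤ (4j+3) ⟨k⟩^{2j+1}`, which trades the excess power `⟨σ⟩^{1/(2j) - (s+1)}` for a power of
`⟨k⟩` at the cost of the constant `(4j+3)^{1/(2j) - (s+1)}`. The regions cover `Ż_λ × ℝ`, so
the integrand of `‖f‖_{X^{s,1/(2j)}}` is dominated at every point by one of the three pieces,
and the `Y^s` part of the `Z^s` norm is not needed.
-/

lemma one_le_jap (x : ℝ) : 1 ≤ jap x :=
  Real.one_le_sqrt.mpr (by nlinarith [sq_nonneg x])

lemma jap_pos (x : ℝ) : 0 < jap x := one_pos.trans_le (one_le_jap x)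

lemma jap_le_one_add_abs (x : ℝ) : jap x ≤ 1 + |x| :=
  Real.sqrt_le_iff.mpr ⟨by positivity, by nlinarith [abs_nonneg x, sq_abs x]⟩

@[fun_prop]
lemma continuous_jap : Continuous jap := by unfold jap; fun_prop

lemma jap_rpow_mul_jap_rpow_nonneg (a b x y : ℝ) : 0 ≤ jap x ^ a * jap y ^ b :=
  mul_nonneg (Real.rpow_nonneg (jap_pos x).le a) (Real.rpow_nonneg (jap_pos y).le b)

lemma jap_rpow_mul_jap_rpow_le {a a' b b' : ℝ} (ha : a ≤ a') (hb : b ≤ b') (x y : ℝ) :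
    jap x ^ a * jap y ^ b ≤ jap x ^ a' * jap y ^ b' :=
  mul_le_mul (Real.rpow_le_rpow_of_exponent_le (one_le_jap x) ha)
    (Real.rpow_le_rpow_of_exponent_le (one_le_jap y) hb) (Real.rpow_nonneg (jap_pos y).le _)
    (Real.rpow_nonneg (jap_pos x).le _)

lemma jap_le_of_abs_le {x y A : ℝ} {N : ℕ} (hA : 0 ≤ A) (h : |y| ≤ A * |x| ^ N) :
    jap y ≤ (1 + A) * jap x ^ N := by
  have hx : |x| ^ N ≤ jap x ^ N :=
    pow_le_pow_left₀ (abs_nonneg x) (Real.abs_le_sqrt (by nlinarith)) N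
  have h1 : 1 ≤ jap x ^ N := one_le_pow₀ (one_le_jap x)
  nlinarith [jap_le_one_add_abs y, mul_le_mul_of_nonneg_left hx hA]

lemma jap_rpow_mul_jap_rpow_le_of_jap_le {x y K N a a' b b' : ℝ} (hK : 0 < K)
    (hy : jap y ≤ K * jap x ^ N) (hb : b' ≤ b) (ha : a + N * (b - b') ≤ a') :
    jap x ^ a * jap y ^ b ≤ K ^ (b - b') * (jap x ^ a' * jap y ^ b') := by
  have hx := jap_pos x
  have hy' : jap y ^ (b - b') ≤ K ^ (b - b') * jap x ^ (N * (b - b')) := by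
    rw [Real.rpow_mul hx.le, ← Real.mul_rpow hK.le (by positivity)]
    exact Real.rpow_le_rpow (jap_pos y).le hy (sub_nonneg.mpr hb)
  calc jap x ^ a * jap y ^ b = jap x ^ a * jap y ^ (b - b') * jap y ^ b' := by
        rw [mul_assoc, ← Real.rpow_add (jap_pos y), sub_add_cancel]
    _ ≤ jap x ^ a * (K ^ (b - b') * jap x ^ (N * (b - b'))) * jap y ^ b' := by
        gcongr
        exact Real.rpow_nonneg (jap_pos y).le _
    _ = K ^ (b - b') * (jap x ^ (a + N * (b - b')) * jap y ^ b') := by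
        rw [Real.rpow_add hx]; ring
    _ ≤ K ^ (b - b') * (jap x ^ a' * jap y ^ b') := by
        gcongr
        · exact Real.rpow_nonneg (jap_pos y).le _
        · exact one_le_jap x

def embeddingConst (j : ℕ) (s : ℝ) : ℝ := (4 * (j : ℝ) + 3) ^ (1 / (2 * (j : ℝ)) - (s + 1))

lemma embeddingConst_pos (j : ℕ) (s : ℝ) : 0 < embeddingConst j s :=
  Real.rpow_pos_of_pos (by positivity) _

lemma one_le_embeddingConst {j : ℕ} {s : ℝ} (hs : s ≤ -1) : 1 ≤ embeddingConst j s :=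
  Real.one_le_rpow (by linarith [j.cast_nonneg (α := ℝ)])
    (by have : 0 ≤ 1 / (2 * (j : ℝ)) := by positivity
        linarith)

section Weights

variable {j : ℕ} {s : ℝ}

lemma weight_le_weight_D15 (hj : 1 ≤ j) (x y : ℝ) :
    jap x ^ s * jap y ^ (1 / (2 * (j : ℝ))) ≤
      jap x ^ s * jap y ^ ((2 * (j : ℝ) - 1) / (2 * (j : ℝ))) := by
  have hJ : (1 : ℝ) ≤ j := by exact_mod_cast hj
  exact jap_rpow_mul_jap_rpow_le le_rfl
    (div_le_div_of_nonneg_right (by linarith) (by positivity)) x y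

lemma weight_le_weight_D2 (hj : 1 ≤ j) (hs₁ : -(j : ℝ) + 1 / 2 ≤ s) (hs₂ : s ≤ -1) {x y : ℝ}
    (hy : |y| ≤ 2 * (2 * (j : ℝ) + 1) * |x| ^ (2 * j + 1)) :
    jap x ^ s * jap y ^ (1 / (2 * (j : ℝ))) ≤
      embeddingConst j s * (jap x ^ ((1 - 2 * (j : ℝ)) * s - 1) * jap y ^ (s + 1)) := by
  have hJ : (1 : ℝ) ≤ j := by exact_mod_cast hj
  have hyx : jap y ≤ (4 * (j : ℝ) + 3) * jap x ^ (2 * (j : ℝ) + 1) :=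
    calc jap y ≤ (1 + 2 * (2 * (j : ℝ) + 1)) * jap x ^ (2 * j + 1) :=
          jap_le_of_abs_le (by positivity) hy
      _ = (4 * (j : ℝ) + 3) * jap x ^ (2 * (j : ℝ) + 1) := by
          rw [← Real.rpow_natCast]; push_cast; ring
  refine jap_rpow_mul_jap_rpow_le_of_jap_le (by positivity) hyx ?_ ?_
  · have : 0 < 1 / (2 * (j : ℝ)) := by positivity
    linarith
  · have h : (2 * (j : ℝ) + 1) * (1 / (2 * (j : ℝ))) ≤ j + 1 / 2 := by
      rw [mul_one_div, div_le_iff₀ (by positivity)]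
      nlinarith
    linarith

lemma weight_le_weight_D34 (hj : 1 ≤ j) (hs₁ : -(j : ℝ) + 1 / 2 ≤ s)
    (hs₂ : s ≤ -(j : ℝ) / 2) (x y : ℝ) :
    jap x ^ s * jap y ^ (1 / (2 * (j : ℝ))) ≤
      jap x ^ (-s / (j : ℝ) - 1) * jap y ^ (s / (j : ℝ) + 1) := by
  have hJ : (0 : ℝ) < j := by exact_mod_cast hj
  refine jap_rpow_mul_jap_rpow_le ?_ ?_ x y
  · rw [div_sub_one hJ.ne', le_div_iff₀ hJ]
    nlinarith
  · rw [div_add_one hJ.ne', div_le_div_iff₀ (by positivity) hJ]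
    nlinarith

end Weights

section Regions

variable (j : ℕ) (lam : ℝ)

lemma measurableSet_D1 : MeasurableSet (D1 j lam) := by unfold D1 sigL; measurability

lemma measurableSet_D2 : MeasurableSet (D2 j lam) := by unfold D2 sigL; measurability

lemma measurableSet_D5 : MeasurableSet (D5 j lam) := by unfold D5 sigL; measurability

lemma mem_D15_or_D2_or_D34 (hlam : 0 < lam) {m : ℤ} (hm : m ≠ 0) (τ : ℝ) :
    (m, τ) ∈ D1 j lam ∪ D5 j lam ∨ (m, τ) ∈ D2 j lam ∨ (m, τ) ∈ D3 j lam ∪ D4 j lam := by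
  have hk : 1 / lam ≤ |(m : ℝ) / lam| := by
    rw [abs_div, abs_of_pos hlam]
    gcongr
    exact_mod_cast Int.one_le_abs hm
  simp only [Set.mem_union]
  rcases le_or_gt 1 |(m : ℝ) / lam| with hk1 | hk1 <;>
  rcases le_or_gt |sigL j lam m τ|
    (2 * (2 * (j : ℝ) + 1) * |(m : ℝ) / lam| ^ (2 * j + 1)) with hσ | hσ
  · rcases le_or_gt |sigL j lam m τ|
      (2 * (2 * (j : ℝ) + 1) / 3 * |(m : ℝ) / lam| ^ (2 * j)) with hσ' | hσ'
    · exact Or.inl (Or.inl ⟨hk1, hσ'⟩)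
    · exact Or.inr (Or.inl ⟨hk1, hσ', hσ⟩)
  · exact Or.inr (Or.inr (Or.inl ⟨hk1, hσ⟩))
  · exact Or.inl (Or.inr ⟨hk, hk1.le, hσ⟩)
  · exact Or.inr (Or.inr (Or.inr ⟨hk, hk1.le, hσ⟩))

end Regions

lemma L2L_sq (lam : ℝ) (g : ℤ → ℝ → ℝ≥0∞) :
    L2L lam g ^ 2 = ENNReal.ofReal (1 / lam) * ∑' m : ℤ, ∫⁻ τ, g m τ ^ 2 := by
  rw [L2L, ← ENNReal.rpow_natCast, ← ENNReal.rpow_mul]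
  norm_num

lemma sq_add_sq_add_sq_le (a b c : ℝ≥0∞) : a ^ 2 + b ^ 2 + c ^ 2 ≤ (a + b + c) ^ 2 :=
  calc a ^ 2 + b ^ 2 + c ^ 2 ≤ a ^ 2 + b ^ 2 + c ^ 2 + 2 * (a * b + b * c + c * a) := le_self_add
    _ = (a + b + c) ^ 2 := by ring

/-- Pointwise `W² ≤ c² (g₁² + g₂² + g₃²)`, and `√(A² + B² + C²) ≤ A + B + C`. -/
lemma L2L_le_of_le_or {lam : ℝ} {W g₁ g₂ g₃ : ℤ → ℝ → ℝ≥0∞} {c : ℝ≥0∞} (hc : c ≠ ⊤)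
    (hg₁ : Measurable (Function.uncurry g₁)) (hg₂ : Measurable (Function.uncurry g₂))
    (h : ∀ m τ, W m τ ≤ c * g₁ m τ ∨ W m τ ≤ c * g₂ m τ ∨ W m τ ≤ c * g₃ m τ) :
    L2L lam W ≤ c * (L2L lam g₁ + L2L lam g₂ + L2L lam g₃) := by
  have hW : ∀ m τ, W m τ ^ 2 ≤ c ^ 2 * (g₁ m τ ^ 2 + g₂ m τ ^ 2 + g₃ m τ ^ 2) := by
    intro m τ
    rcases h m τ with h | h | h <;>
      refine (pow_le_pow_left' h 2).trans (mul_pow c _ 2 ▸ mul_le_mul_right ?_ _)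
    · exact le_add_right le_self_add
    · exact le_add_right le_add_self
    · exact le_add_self
  have hg₁' : ∀ m, Measurable fun τ => g₁ m τ ^ 2 :=
    fun m => (hg₁.comp measurable_prodMk_left).pow_const 2
  have hg₂' : ∀ m, Measurable fun τ => g₂ m τ ^ 2 :=
    fun m => (hg₂.comp measurable_prodMk_left).pow_const 2
  rw [← ENNReal.pow_le_pow_left_iff two_ne_zero, mul_pow, L2L_sq]
  calc ENNReal.ofReal (1 / lam) * ∑' m, ∫⁻ τ, W m τ ^ 2
      ≤ ENNReal.ofReal (1 / lam) *
          ∑' m, ∫⁻ τ, c ^ 2 * (g₁ m τ ^ 2 + g₂ m τ ^ 2 + g₃ m τ ^ 2) := by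
        gcongr with m τ
        exact hW m τ
    _ = c ^ 2 * (L2L lam g₁ ^ 2 + L2L lam g₂ ^ 2 + L2L lam g₃ ^ 2) := by
        have hm : ∀ m, ∫⁻ τ, c ^ 2 * (g₁ m τ ^ 2 + g₂ m τ ^ 2 + g₃ m τ ^ 2) =
            c ^ 2 * ((∫⁻ τ, g₁ m τ ^ 2) + (∫⁻ τ, g₂ m τ ^ 2) + ∫⁻ τ, g₃ m τ ^ 2) := fun m => by
          rw [lintegral_const_mul' _ _ (ENNReal.pow_ne_top hc),
            lintegral_add_left (f := fun τ => g₁ m τ ^ 2 + g₂ m τ ^ 2) ((hg₁' m).add (hg₂' m)),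
            lintegral_add_left (hg₁' m)]
        simp_rw [hm, L2L_sq, ENNReal.tsum_mul_left, ENNReal.tsum_add]
        ring
    _ ≤ c ^ 2 * (L2L lam g₁ + L2L lam g₂ + L2L lam g₃) ^ 2 := by
        gcongr
        exact sq_add_sq_add_sq_le _ _ _

section Weighted

variable {j : ℕ} {lam s a b : ℝ} {f : ℤ → ℝ → ℝ≥0∞}

/-- The integrand of the `X^{a,b}` norm: `Xn j lam a b f = L2L lam (weighted j lam a b f)`
holds definitionally. -/
def weighted (j : ℕ) (lam a b : ℝ) (f : ℤ → ℝ → ℝ≥0∞) (m : ℤ) (τ : ℝ) : ℝ≥0∞ :=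
  ENNReal.ofReal (jap ((m : ℝ) / lam) ^ a * jap (sigL j lam m τ) ^ b) * f m τ

lemma measurable_weighted (hf : Measurable (Function.uncurry f)) :
    Measurable (Function.uncurry (weighted j lam a b f)) := by
  unfold weighted sigL
  exact (by fun_prop : Measurable fun p : ℤ × ℝ => ENNReal.ofReal
    (jap ((p.1 : ℝ) / lam) ^ a * jap (p.2 - ((p.1 : ℝ) / lam) ^ (2 * j + 1)) ^ b)).mul hf

lemma measurable_restr {D : Set (ℤ × ℝ)} (hD : MeasurableSet D)
    (hf : Measurable (Function.uncurry f)) : Measurable (Function.uncurry (restr D f)) :=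
  hf.indicator hD

lemma weighted_le_of_mem {D : Set (ℤ × ℝ)} {a' b' K : ℝ} {m : ℤ} {τ : ℝ} (hmem : (m, τ) ∈ D)
    (h : jap ((m : ℝ) / lam) ^ a * jap (sigL j lam m τ) ^ b ≤
      K * (jap ((m : ℝ) / lam) ^ a' * jap (sigL j lam m τ) ^ b')) :
    weighted j lam a b f m τ ≤ ENNReal.ofReal K * weighted j lam a' b' (restr D f) m τ := by
  rw [weighted, weighted, restr, Set.indicator_of_mem hmem, ← mul_assoc,
    ← ENNReal.ofReal_mul' (jap_rpow_mul_jap_rpow_nonneg _ _ _ _)]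
  exact mul_le_mul_left (ENNReal.ofReal_le_ofReal h) _

lemma weighted_le_or (hj : 2 ≤ j) (hs₁ : -(j : ℝ) + 1 / 2 ≤ s) (hs₂ : s ≤ -(j : ℝ) / 2)
    (hlam : 0 < lam) (hf0 : ∀ τ, f 0 τ = 0) (m : ℤ) (τ : ℝ) :
    let W := weighted j lam s (1 / (2 * (j : ℝ))) f m τ
    let c := ENNReal.ofReal (embeddingConst j s)
    W ≤ c * weighted j lam s ((2 * (j : ℝ) - 1) / (2 * (j : ℝ)))
        (restr (D1 j lam ∪ D5 j lam) f) m τ ∨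
      W ≤ c * weighted j lam ((1 - 2 * (j : ℝ)) * s - 1) (s + 1) (restr (D2 j lam) f) m τ ∨
      W ≤ c * weighted j lam (-s / (j : ℝ) - 1) (s / (j : ℝ) + 1)
        (restr (D3 j lam ∪ D4 j lam) f) m τ := by
  intro W c
  have hj1 : 1 ≤ j := by omega
  have hs : s ≤ -1 := by
    have : (2 : ℝ) ≤ j := by exact_mod_cast hj
    linarith
  have hC := one_le_embeddingConst (j := j) hs
  rcases eq_or_ne m 0 with rfl | hm
  · simp [W, weighted, hf0]
  rcases mem_D15_or_D2_or_D34 j lam hlam hm τ with h | h | h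
  · exact Or.inl (weighted_le_of_mem h ((weight_le_weight_D15 hj1 _ _).trans
      (le_mul_of_one_le_left (jap_rpow_mul_jap_rpow_nonneg _ _ _ _) hC)))
  · exact Or.inr (Or.inl (weighted_le_of_mem h (weight_le_weight_D2 hj1 hs₁ hs h.2.2)))
  · exact Or.inr (Or.inr (weighted_le_of_mem h ((weight_le_weight_D34 hj1 hs₁ hs₂ _ _).trans
      (le_mul_of_one_le_left (jap_rpow_mul_jap_rpow_nonneg _ _ _ _) hC))))

end Weighted

/-- **Lemma 2.5, estimate (2.06), first inequality:** `‖u‖_{X^{s,1/(2j)}} ≤ C‖u‖_{Z^s}`. -/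
theorem stmt_9 (j : ℕ) (hj : 2 ≤ j) (s : ℝ)
    (hs₁ : -(j : ℝ) + 1 / 2 ≤ s) (hs₂ : s ≤ -(j : ℝ) / 2) :
    ∃ C : ℝ, 0 < C ∧ ∀ lam : ℝ, 1 ≤ lam → ∀ f : ℤ → ℝ → ℝ≥0∞,
      Measurable (Function.uncurry f) → (∀ τ, f 0 τ = 0) →
      Xn j lam s (1 / (2 * (j : ℝ))) f ≤ ENNReal.ofReal C * Zn j lam s f := by
  refine ⟨embeddingConst j s, embeddingConst_pos j s, fun lam hlam f hf hf0 => ?_⟩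
  calc Xn j lam s (1 / (2 * (j : ℝ))) f
      ≤ ENNReal.ofReal (embeddingConst j s) * XSn j lam s f :=
        L2L_le_of_le_or ENNReal.ofReal_ne_top
          (measurable_weighted (measurable_restr
            ((measurableSet_D1 j lam).union (measurableSet_D5 j lam)) hf))
          (measurable_weighted (measurable_restr (measurableSet_D2 j lam) hf))
          (weighted_le_or hj hs₁ hs₂ (by linarith) hf0)
    _ ≤ ENNReal.ofReal (embeddingConst j s) * Zn j lam s f := mul_le_mul_right le_self_add _

end
end

section
/- Let j ≥ 2 be an integer and let s ∈ ℝ satisfy −j + 1/2 ≤ s ≤ −j/2. There exists a constant C > 0 depending only on j and s such that for every λ ≥ 1 and every nonnegative measurable f : Ż_λ × ℝ → [0,∞], the Z^s norm of f is at most C times the X^{s,(2j−1)/(2j)} norm of f. -/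
open MeasureTheory
open scoped ENNReal

noncomputable section

lemma abs_le_jap (x : ℝ) : |x| ≤ jap x := by
  rw [← Real.sqrt_sq_eq_abs]
  exact Real.sqrt_le_sqrt (by linarith)

lemma jap_le_two_mul_abs {x : ℝ} (hx : 1 ≤ |x|) : jap x ≤ 2 * |x| := by
  refine Real.sqrt_le_iff.2 ⟨by positivity, ?_⟩
  nlinarith [sq_abs x]

lemma jap_le_two {x : ℝ} (hx : |x| ≤ 1) : jap x ≤ 2 := by
  refine Real.sqrt_le_iff.2 ⟨by positivity, ?_⟩
  nlinarith [sq_abs x, abs_nonneg x]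

lemma jap_rpow (x t : ℝ) : jap x ^ t = (1 + x ^ 2) ^ (t / 2) := by
  rw [jap, Real.sqrt_eq_rpow, ← Real.rpow_mul (by positivity)]
  ring_nf

lemma lintegral_ofReal_jap_rpow_neg_lt_top {r : ℝ} (hr : 1 < r) :
    ∫⁻ x, ENNReal.ofReal (jap x ^ (-r)) < ⊤ := by
  have := integrable_rpow_neg_one_add_norm_sq (E := ℝ) (μ := volume) (r := r) (by simpa using hr)
  refine Integrable.lintegral_lt_top ?_
  simpa [jap_rpow, neg_div] using this

lemma rpow_mul_rpow_le_of_half_rpow_le {u v a e p s b : ℝ} (hu : 1 ≤ u) (hv : (u / 2) ^ a ≤ v)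
    (he : e ≤ 0) (hps : p + a * e ≤ s) :
    u ^ p * v ^ (b + e) ≤ 2 ^ (-(a * e)) * (u ^ s * v ^ b) := by
  have hu₀ : 0 < u := by linarith
  have hv₀ : 0 < v := (Real.rpow_pos_of_pos (by positivity) a).trans_le hv
  have hve : v ^ e ≤ 2 ^ (-(a * e)) * u ^ (a * e) := calc
    v ^ e ≤ ((u / 2) ^ a) ^ e := Real.rpow_le_rpow_of_nonpos (by positivity) hv he
    _ = 2 ^ (-(a * e)) * u ^ (a * e) := by
      rw [← Real.rpow_mul (by positivity), Real.div_rpow hu₀.le zero_le_two,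
        Real.rpow_neg zero_le_two, div_eq_inv_mul]
  have hup : u ^ p * u ^ (a * e) ≤ u ^ s := by
    rw [← Real.rpow_add hu₀]
    exact Real.rpow_le_rpow_of_exponent_le hu hps
  calc u ^ p * v ^ (b + e) = u ^ p * v ^ e * v ^ b := by rw [Real.rpow_add hv₀]; ring
    _ ≤ u ^ p * (2 ^ (-(a * e)) * u ^ (a * e)) * v ^ b := by gcongr
    _ = 2 ^ (-(a * e)) * (u ^ p * u ^ (a * e)) * v ^ b := by ring
    _ ≤ 2 ^ (-(a * e)) * u ^ s * v ^ b := by gcongr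
    _ = 2 ^ (-(a * e)) * (u ^ s * v ^ b) := mul_assoc _ _ _

lemma rpow_mul_rpow_le_of_le_two {u v p q s b : ℝ} (hu₁ : 1 ≤ u) (hu₂ : u ≤ 2) (hv : 1 ≤ v)
    (hp : p ≤ 0) (hq : q ≤ b) (hs : s ≤ 0) :
    u ^ p * v ^ q ≤ 2 ^ (-s) * (u ^ s * v ^ b) := by
  have h₂ : 1 ≤ 2 ^ (-s) * u ^ s := calc
    (1 : ℝ) = 2 ^ (-s) * 2 ^ s := by rw [← Real.rpow_add two_pos]; simp
    _ ≤ 2 ^ (-s) * u ^ s :=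
      mul_le_mul_of_nonneg_left (Real.rpow_le_rpow_of_nonpos (by linarith) hu₂ hs) (by positivity)
  calc u ^ p * v ^ q ≤ 1 * v ^ b :=
        mul_le_mul (Real.rpow_le_one_of_one_le_of_nonpos hu₁ hp)
          (Real.rpow_le_rpow_of_exponent_le hv hq) (by positivity) zero_le_one
    _ ≤ 2 ^ (-s) * u ^ s * v ^ b := by gcongr
    _ = 2 ^ (-s) * (u ^ s * v ^ b) := mul_assoc _ _ _

def xWeight (j : ℕ) (lam s b : ℝ) (m : ℤ) (τ : ℝ) : ℝ :=
  jap ((m : ℝ) / lam) ^ s * jap (sigL j lam m τ) ^ b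

lemma xWeight_le_of_mem_D2 {j : ℕ} (hj : 0 < j) {lam s : ℝ} (hs : s ≤ -1 / (2 * j))
    {m : ℤ} {τ : ℝ} (h : (m, τ) ∈ D2 j lam) :
    xWeight j lam ((1 - 2 * j) * s - 1) (s + 1) m τ ≤
      2 ^ (-(2 * j * (s + 1 / (2 * j)))) * xWeight j lam s ((2 * j - 1) / (2 * j)) m τ := by
  obtain ⟨hk, hσ, -⟩ := h
  have hj₀ : (1 : ℝ) ≤ j := by exact_mod_cast hj
  have hv : (jap ((m : ℝ) / lam) / 2) ^ (2 * (j : ℝ)) ≤ jap (sigL j lam m τ) := calc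
    _ ≤ |(m : ℝ) / lam| ^ (2 * (j : ℝ)) := by
        gcongr
        · exact div_nonneg (jap_pos _).le zero_le_two
        · linarith [jap_le_two_mul_abs hk]
    _ = |(m : ℝ) / lam| ^ (2 * j) := by norm_cast
    _ ≤ 2 * (2 * (j : ℝ) + 1) / 3 * |(m : ℝ) / lam| ^ (2 * j) :=
        le_mul_of_one_le_left (by positivity) (by rw [le_div_iff₀ three_pos]; linarith)
    _ ≤ jap (sigL j lam m τ) := hσ.le.trans (abs_le_jap _)
  rw [xWeight, show s + 1 = (2 * j - 1) / (2 * j) + (s + 1 / (2 * j)) by field_simp; ring]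
  refine rpow_mul_rpow_le_of_half_rpow_le (one_le_jap _) hv ?_ (le_of_eq ?_)
  · linarith [neg_div (2 * (j : ℝ)) 1]
  · field_simp
    ring

lemma xWeight_le_of_mem_D3 {j : ℕ} (hj : 0 < j) {lam s : ℝ} (hs : s ≤ -1 / 2)
    {m : ℤ} {τ : ℝ} (h : (m, τ) ∈ D3 j lam) :
    xWeight j lam (-s / j - 1) (s / j + 1) m τ ≤
      2 ^ (-((2 * j + 1) * ((2 * s + 1) / (2 * j)))) *
        xWeight j lam s ((2 * j - 1) / (2 * j)) m τ := by
  obtain ⟨hk, hσ⟩ := h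
  have hj₀ : (1 : ℝ) ≤ j := by exact_mod_cast hj
  have hv : (jap ((m : ℝ) / lam) / 2) ^ (2 * (j : ℝ) + 1) ≤ jap (sigL j lam m τ) := calc
    _ ≤ |(m : ℝ) / lam| ^ (2 * (j : ℝ) + 1) := by
        gcongr
        · exact div_nonneg (jap_pos _).le zero_le_two
        · linarith [jap_le_two_mul_abs hk]
    _ = |(m : ℝ) / lam| ^ (2 * j + 1) := by norm_cast
    _ ≤ 2 * (2 * (j : ℝ) + 1) * |(m : ℝ) / lam| ^ (2 * j + 1) :=
        le_mul_of_one_le_left (by positivity) (by linarith)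
    _ ≤ jap (sigL j lam m τ) := hσ.le.trans (abs_le_jap _)
  have hexp : -s / j - 1 + (2 * j + 1) * ((2 * s + 1) / (2 * j)) = s + (s + 1 / (2 * j)) := by
    field_simp
    ring
  have hj_inv : 1 / (2 * (j : ℝ)) ≤ 1 / 2 := by gcongr; linarith
  rw [xWeight, show s / j + 1 = (2 * j - 1) / (2 * j) + (2 * s + 1) / (2 * j) by field_simp; ring]
  refine rpow_mul_rpow_le_of_half_rpow_le (one_le_jap _) hv ?_ (by linarith)
  exact div_nonpos_of_nonpos_of_nonneg (by linarith) (by positivity)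

lemma xWeight_le_of_mem_D4 {j : ℕ} (hj : 0 < j) {lam s : ℝ} (hs₁ : -(j : ℝ) ≤ s)
    (hs₂ : s ≤ -1 / 2) {m : ℤ} {τ : ℝ} (h : (m, τ) ∈ D4 j lam) :
    xWeight j lam (-s / j - 1) (s / j + 1) m τ ≤
      2 ^ (-s) * xWeight j lam s ((2 * j - 1) / (2 * j)) m τ := by
  obtain ⟨-, hk, -⟩ := h
  have hj₀ : (0 : ℝ) < j := by exact_mod_cast hj
  have hp : -s / j - 1 ≤ 0 := by
    have : -s / j ≤ 1 := (div_le_one hj₀).2 (by linarith)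
    linarith
  have hq : s / j + 1 ≤ (2 * j - 1) / (2 * j) := by
    have : (2 * j - 1) / (2 * j) - (s / j + 1) = (-1 - 2 * s) / (2 * j) := by
      field_simp
      ring
    linarith [div_nonneg (by linarith : (0 : ℝ) ≤ -1 - 2 * s) (by positivity : (0 : ℝ) ≤ 2 * j)]
  exact rpow_mul_rpow_le_of_le_two (one_le_jap _) (jap_le_two hk) (one_le_jap _) hp hq
    (by linarith)

lemma xWeight_nonneg (j : ℕ) (lam s b : ℝ) (m : ℤ) (τ : ℝ) : 0 ≤ xWeight j lam s b m τ :=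
  mul_nonneg (Real.rpow_nonneg (jap_pos _).le _) (Real.rpow_nonneg (jap_pos _).le _)

lemma xWeight_le_of_mem_D3_union_D4 {j : ℕ} (hj : 0 < j) {lam s : ℝ} (hs₁ : -(j : ℝ) ≤ s)
    (hs₂ : s ≤ -1 / 2) {m : ℤ} {τ : ℝ} (h : (m, τ) ∈ D3 j lam ∪ D4 j lam) :
    xWeight j lam (-s / j - 1) (s / j + 1) m τ ≤
      (2 ^ (-((2 * j + 1) * ((2 * s + 1) / (2 * j)))) + 2 ^ (-s)) *
        xWeight j lam s ((2 * j - 1) / (2 * j)) m τ := by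
  have hw := xWeight_nonneg j lam s ((2 * j - 1) / (2 * j)) m τ
  rcases h with h | h
  · refine (xWeight_le_of_mem_D3 hj hs₂ h).trans (mul_le_mul_of_nonneg_right ?_ hw)
    exact le_add_of_nonneg_right (by positivity)
  · refine (xWeight_le_of_mem_D4 hj hs₁ hs₂ h).trans (mul_le_mul_of_nonneg_right ?_ hw)
    exact le_add_of_nonneg_left (by positivity)

lemma rpow_half_le_mul_rpow_half {x y c : ℝ≥0∞} (h : x ≤ c * y) :
    x ^ (1 / 2 : ℝ) ≤ c ^ (1 / 2 : ℝ) * y ^ (1 / 2 : ℝ) :=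
  (ENNReal.rpow_le_rpow h (by norm_num)).trans_eq (ENNReal.mul_rpow_of_nonneg _ _ (by norm_num))

lemma L2L_le_mul {lam : ℝ} {F G : ℤ → ℝ → ℝ≥0∞} {c : ℝ≥0∞} (hc : c ≠ ⊤)
    (h : ∀ m τ, F m τ ≤ c * G m τ) : L2L lam F ≤ c * L2L lam G := by
  have hsq : ENNReal.ofReal (1 / lam) * ∑' m : ℤ, ∫⁻ τ, F m τ ^ 2 ≤
      c ^ 2 * (ENNReal.ofReal (1 / lam) * ∑' m : ℤ, ∫⁻ τ, G m τ ^ 2) := by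
    rw [mul_left_comm (c ^ 2)]
    refine mul_le_mul_right ?_ _
    rw [← ENNReal.tsum_mul_left]
    refine ENNReal.tsum_le_tsum fun m => ?_
    rw [← lintegral_const_mul' _ _ (ENNReal.pow_ne_top hc)]
    gcongr with τ
    rw [← mul_pow]
    exact pow_le_pow_left' (h m τ) 2
  have hc' : (c ^ 2) ^ (1 / 2 : ℝ) = c := by
    simpa using ENNReal.pow_rpow_inv_natCast two_ne_zero c
  simpa only [L2L, hc'] using rpow_half_le_mul_rpow_half hsq

lemma Xn_restr_le {j : ℕ} {lam s₁ b₁ s₂ b₂ C : ℝ} {D : Set (ℤ × ℝ)} (hC : 0 ≤ C)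
    (hw : ∀ m τ, (m, τ) ∈ D → xWeight j lam s₁ b₁ m τ ≤ C * xWeight j lam s₂ b₂ m τ)
    (f : ℤ → ℝ → ℝ≥0∞) :
    Xn j lam s₁ b₁ (restr D f) ≤ ENNReal.ofReal C * Xn j lam s₂ b₂ f := by
  refine L2L_le_mul ENNReal.ofReal_ne_top fun m τ => ?_
  by_cases hD : (m, τ) ∈ D
  · rw [restr, Set.indicator_of_mem hD, ← mul_assoc, ← ENNReal.ofReal_mul hC]
    exact mul_le_mul_left (ENNReal.ofReal_le_ofReal (hw m τ hD)) _
  · simp [restr, Set.indicator_of_notMem hD]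

lemma Xn_restr_le_self (j : ℕ) (lam s b : ℝ) (D : Set (ℤ × ℝ)) (f : ℤ → ℝ → ℝ≥0∞) :
    Xn j lam s b (restr D f) ≤ Xn j lam s b f := by
  simpa using Xn_restr_le (D := D) zero_le_one (fun m τ _ => (one_mul _).ge) f

lemma sq_lintegral_le_lintegral_inv_sq_mul {α : Type*} [MeasurableSpace α] {μ : Measure α}
    {f w : α → ℝ≥0∞} (hf : AEMeasurable f μ) (hw : AEMeasurable w μ) (hw₀ : ∀ a, w a ≠ 0)
    (hw_top : ∀ a, w a ≠ ⊤) :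
    (∫⁻ a, f a ∂μ) ^ 2 ≤ (∫⁻ a, (w a)⁻¹ ^ 2 ∂μ) * ∫⁻ a, (w a * f a) ^ 2 ∂μ := by
  have hf_eq : w⁻¹ * (w * f) = f := by
    ext a
    simp [← mul_assoc, ENNReal.inv_mul_cancel (hw₀ a) (hw_top a)]
  have h := ENNReal.lintegral_mul_le_Lp_mul_Lq μ Real.HolderConjugate.two_two hw.inv (hw.mul hf)
  rw [hf_eq] at h
  simp only [Pi.mul_apply, Pi.inv_apply, ENNReal.rpow_two] at h
  calc (∫⁻ a, f a ∂μ) ^ 2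
      ≤ ((∫⁻ a, (w a)⁻¹ ^ 2 ∂μ) ^ (1 / 2 : ℝ) * (∫⁻ a, (w a * f a) ^ 2 ∂μ) ^ (1 / 2 : ℝ)) ^ 2 :=
        pow_le_pow_left' h 2
    _ = (∫⁻ a, (w a)⁻¹ ^ 2 ∂μ) * ∫⁻ a, (w a * f a) ^ 2 ∂μ := by
        simp only [mul_pow, ← ENNReal.rpow_natCast, ← ENNReal.rpow_mul]
        norm_num

lemma ofReal_rpow_sq {x : ℝ} (hx : 0 ≤ x) (t : ℝ) :
    ENNReal.ofReal (x ^ t) ^ 2 = ENNReal.ofReal (x ^ (2 * t)) := by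
  rw [← ENNReal.ofReal_pow (Real.rpow_nonneg hx t), ← Real.rpow_natCast, ← Real.rpow_mul hx,
    mul_comm]
  norm_num

lemma Yn_le (j : ℕ) (lam s b : ℝ) {f : ℤ → ℝ → ℝ≥0∞} (hf : Measurable (Function.uncurry f)) :
    Yn lam s f ≤ (∫⁻ x, ENNReal.ofReal (jap x ^ (-(2 * b)))) ^ (1 / 2 : ℝ) * Xn j lam s b f := by
  set I := ∫⁻ x, ENNReal.ofReal (jap x ^ (-(2 * b)))
  have hm (m : ℤ) : ENNReal.ofReal (jap ((m : ℝ) / lam) ^ (2 * s)) * (∫⁻ τ, f m τ) ^ 2 ≤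
      I * ∫⁻ τ, (ENNReal.ofReal (xWeight j lam s b m τ) * f m τ) ^ 2 := by
    set w : ℝ → ℝ≥0∞ := fun τ => ENNReal.ofReal (jap (sigL j lam m τ) ^ b)
    have hw : Measurable w := by
      have : Continuous fun τ => jap (sigL j lam m τ) := by unfold jap sigL; fun_prop
      exact ENNReal.measurable_ofReal.comp
        (this.rpow_const fun τ => Or.inl (jap_pos _).ne').measurable
    have hfm : Measurable (f m) := hf.comp measurable_prodMk_left
    have hcs := sq_lintegral_le_lintegral_inv_sq_mul (μ := volume) hfm.aemeasurable
      hw.aemeasurable (fun τ => by simp [w, Real.rpow_pos_of_pos (jap_pos _)])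
      (fun τ => ENNReal.ofReal_ne_top)
    have hI : ∫⁻ τ, (w τ)⁻¹ ^ 2 = I := by
      simp only [w, ← ENNReal.ofReal_inv_of_pos (Real.rpow_pos_of_pos (jap_pos _) _),
        ← Real.rpow_neg (jap_pos _).le, ofReal_rpow_sq (jap_pos _).le, mul_neg]
      exact lintegral_sub_right_eq_self (fun x => ENNReal.ofReal (jap x ^ (-(2 * b)))) _
    have hweight (τ : ℝ) : ENNReal.ofReal (jap ((m : ℝ) / lam) ^ (2 * s)) * (w τ * f m τ) ^ 2 =
        (ENNReal.ofReal (xWeight j lam s b m τ) * f m τ) ^ 2 := by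
      rw [xWeight, ENNReal.ofReal_mul (Real.rpow_nonneg (jap_pos _).le _), mul_assoc,
        mul_pow _ (w τ * f m τ), ofReal_rpow_sq (jap_pos _).le]
    calc ENNReal.ofReal (jap ((m : ℝ) / lam) ^ (2 * s)) * (∫⁻ τ, f m τ) ^ 2
        ≤ ENNReal.ofReal (jap ((m : ℝ) / lam) ^ (2 * s)) * (I * ∫⁻ τ, (w τ * f m τ) ^ 2) := by
          rw [← hI]
          exact mul_le_mul_right hcs _
      _ = I * ∫⁻ τ, (ENNReal.ofReal (xWeight j lam s b m τ) * f m τ) ^ 2 := by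
          rw [mul_left_comm, ← lintegral_const_mul' _ _ ENNReal.ofReal_ne_top]
          simp only [hweight]
  refine rpow_half_le_mul_rpow_half ?_
  rw [mul_left_comm I]
  refine mul_le_mul_right ?_ _
  rw [← ENNReal.tsum_mul_left]
  exact ENNReal.tsum_le_tsum hm

/-- **Lemma 2.5, estimate (2.06), second inequality:** `‖u‖_{Z^s} ≤ C‖u‖_{X^{s,(2j−1)/(2j)}}`. -/
theorem stmt_10 (j : ℕ) (hj : 2 ≤ j) (s : ℝ)
    (hs₁ : -(j : ℝ) + 1 / 2 ≤ s) (hs₂ : s ≤ -(j : ℝ) / 2) :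
    ∃ C : ℝ, 0 < C ∧ ∀ lam : ℝ, 1 ≤ lam → ∀ f : ℤ → ℝ → ℝ≥0∞,
      Measurable (Function.uncurry f) → (∀ τ, f 0 τ = 0) →
      Zn j lam s f ≤
        ENNReal.ofReal C * Xn j lam s ((2 * (j : ℝ) - 1) / (2 * (j : ℝ))) f := by
  have hj₀ : 0 < j := by omega
  have hj₂ : (2 : ℝ) ≤ j := by exact_mod_cast hj
  have hj_inv : 1 / (2 * (j : ℝ)) ≤ 1 / 4 := by gcongr; linarith
  set b := (2 * (j : ℝ) - 1) / (2 * (j : ℝ))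
  set I := ∫⁻ x, ENNReal.ofReal (jap x ^ (-(2 * b)))
  have hI : I ^ (1 / 2 : ℝ) ≠ ⊤ := by
    have hb : b = 1 - 1 / (2 * j) := by simp only [b]; field_simp
    exact ENNReal.rpow_ne_top_of_nonneg (by norm_num)
      (lintegral_ofReal_jap_rpow_neg_lt_top (by linarith)).ne
  set C₂ : ℝ := 2 ^ (-(2 * j * (s + 1 / (2 * j))))
  set C₃₄ : ℝ := 2 ^ (-((2 * j + 1) * ((2 * s + 1) / (2 * j)))) + 2 ^ (-s)
  refine ⟨1 + C₂ + C₃₄ + (I ^ (1 / 2 : ℝ)).toReal, by positivity, fun lam _ f hf _ => ?_⟩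
  have h₁ := Xn_restr_le_self j lam s b (D1 j lam ∪ D5 j lam) f
  have h₂ := Xn_restr_le (D := D2 j lam) (by positivity)
    (fun m τ h => xWeight_le_of_mem_D2 (s := s) hj₀ (by linarith [neg_div (2 * (j : ℝ)) 1]) h) f
  have h₃₄ := Xn_restr_le (D := D3 j lam ∪ D4 j lam) (by positivity)
    (fun m τ h => xWeight_le_of_mem_D3_union_D4 (s := s) hj₀ (by linarith) (by linarith) h) f
  calc Zn j lam s f
      ≤ Xn j lam s b f + ENNReal.ofReal C₂ * Xn j lam s b f + ENNReal.ofReal C₃₄ * Xn j lam s b f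
          + I ^ (1 / 2 : ℝ) * Xn j lam s b f :=
        add_le_add (add_le_add (add_le_add h₁ h₂) h₃₄) (Yn_le j lam s b hf)
    _ = ENNReal.ofReal (1 + C₂ + C₃₄ + (I ^ (1 / 2 : ℝ)).toReal) * Xn j lam s b f := by
        rw [ENNReal.ofReal_add (p := 1 + C₂ + C₃₄) (by positivity) ENNReal.toReal_nonneg,
          ENNReal.ofReal_add (p := 1 + C₂) (q := C₃₄) (by positivity) (by positivity),
          ENNReal.ofReal_add (p := 1) (q := C₂) zero_le_one (by positivity), ENNReal.ofReal_one,
          ENNReal.ofReal_toReal hI]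
        ring

end
end

section
/- Let j ≥ 2 be an integer and let s ∈ ℝ satisfy −j + 1/2 ≤ s ≤ −j/2. There exists a constant C > 0 depending only on j and s such that for every λ ≥ 1 and every nonnegative measurable f : Ż_λ × ℝ → [0,∞] that vanishes outside D₁ ∪ D₂, the X^{s,1/2} norm of f is at most C times the Z^s norm of f. -/
open MeasureTheory
open scoped ENNReal

noncomputable section

lemma jap_sq (x : ℝ) : jap x ^ 2 = 1 + x ^ 2 :=
  Real.sq_sqrt (by positivity)

lemma keyD2 (j : ℕ) {s : ℝ} (hs₁ : -(j:ℝ) + 1/2 ≤ s)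
    {k σ : ℝ} (hσ : |σ| ≤ 2*(2*(j:ℝ)+1) * |k| ^ (2*j+1)) (hp : 0 ≤ -s - 1/2) :
    jap k ^ s * jap σ ^ (1/2:ℝ) ≤
      (Real.sqrt (1 + (2*(2*(j:ℝ)+1))^2)) ^ (-s - 1/2) *
        (jap k ^ ((1 - 2*(j:ℝ))*s - 1) * jap σ ^ (s+1)) := by
  set a := jap k with ha_def
  set b := jap σ with hb_def
  set A := Real.sqrt (1 + (2*(2*(j:ℝ)+1))^2) with hA_def
  set p := -s - 1/2 with hp_def
  have ha : 1 ≤ a := one_le_jap k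
  have hb : 1 ≤ b := one_le_jap σ
  have apos : 0 < a := jap_pos k
  have bpos : 0 < b := jap_pos σ
  set M := 2*(2*(j:ℝ)+1) with hM_def
  have hM : 0 ≤ M := by positivity
  have hk2 : k ^ 2 ≤ a ^ 2 := by rw [jap_sq]; linarith
  have hσ2 : σ ^ 2 ≤ M ^ 2 * (a ^ 2) ^ (2*j+1) := by
    have h1 : σ ^ 2 = |σ| ^ 2 := (sq_abs σ).symm
    have h2 : (|k| ^ (2*j+1)) ^ 2 = (k ^ 2) ^ (2*j+1) := by
      rw [← abs_pow, sq_abs]; ring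
    have h3 : (k^2) ^ (2*j+1) ≤ (a^2) ^ (2*j+1) :=
      pow_le_pow_left₀ (sq_nonneg k) hk2 _
    calc σ ^ 2 = |σ| ^ 2 := h1
      _ ≤ (M * |k| ^ (2*j+1)) ^ 2 := by
          apply pow_le_pow_left₀ (abs_nonneg σ) hσ
      _ = M ^ 2 * (k^2) ^ (2*j+1) := by rw [mul_pow, h2]
      _ ≤ M ^ 2 * (a^2) ^ (2*j+1) := by nlinarith [sq_nonneg M]
  have hone : (1:ℝ) ≤ (a^2) ^ (2*j+1) := one_le_pow₀ (by nlinarith)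
  have hbA : b ≤ A * a ^ (2*j+1) := by
    have h1 : 1 + σ ^ 2 ≤ (1 + M^2) * (a^2) ^ (2*j+1) := by nlinarith [sq_nonneg M]
    have h2 : b ≤ Real.sqrt ((1 + M^2) * (a^2)^(2*j+1)) := Real.sqrt_le_sqrt h1
    have h3 : Real.sqrt ((1 + M^2) * (a^2)^(2*j+1)) = A * a^(2*j+1) := by
      rw [Real.sqrt_mul (by positivity)]
      congr 1
      rw [show (a^2)^(2*j+1) = (a^(2*j+1))^2 by ring]
      exact Real.sqrt_sq (by positivity)
    rw [h3] at h2; exact h2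
  have hA1 : 1 ≤ A := Real.one_le_sqrt.mpr (by nlinarith [sq_nonneg M])
  have hsplit : b ^ (1/2:ℝ) = b ^ (s+1) * b ^ p := by
    rw [← Real.rpow_add bpos]; norm_num [hp_def]; ring_nf
  have hbp : b ^ p ≤ A ^ p * a ^ (((2*j+1 : ℕ) : ℝ) * p) := by
    calc b ^ p ≤ (A * a ^ (2*j+1)) ^ p :=
          Real.rpow_le_rpow bpos.le hbA hp
      _ = A ^ p * (a ^ (2*j+1)) ^ p := Real.mul_rpow (by positivity) (by positivity)
      _ = A ^ p * a ^ (((2*j+1:ℕ):ℝ) * p) := by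
          rw [← Real.rpow_natCast a (2*j+1), ← Real.rpow_mul apos.le]
  have hexp : s + ((2*j+1:ℕ):ℝ) * p ≤ (1 - 2*(j:ℝ))*s - 1 := by
    push_cast
    rw [hp_def]; ring_nf; nlinarith
  calc a ^ s * b ^ (1/2:ℝ) = a ^ s * b ^ (s+1) * b ^ p := by rw [hsplit]; ring
    _ ≤ a ^ s * b ^ (s+1) * (A ^ p * a ^ (((2*j+1:ℕ):ℝ) * p)) := by
        apply mul_le_mul_of_nonneg_left hbp (by positivity)
    _ = A ^ p * (a ^ (s + ((2*j+1:ℕ):ℝ) * p) * b ^ (s+1)) := by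
        rw [Real.rpow_add apos]; ring
    _ ≤ A ^ p * (a ^ ((1 - 2*(j:ℝ))*s - 1) * b ^ (s+1)) := by
        apply mul_le_mul_of_nonneg_left _ (by positivity)
        apply mul_le_mul_of_nonneg_right _ (by positivity)
        exact Real.rpow_le_rpow_of_exponent_le ha hexp

lemma restr_apply_eq (D : Set (ℤ × ℝ)) (f : ℤ → ℝ → ℝ≥0∞) (m : ℤ) :
    restr D f m = Set.indicator {τ | (m, τ) ∈ D} (f m) := by
  funext τ
  by_cases h : (m, τ) ∈ D
  · simp [restr, Set.indicator_of_mem h,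
      Set.indicator_of_mem (show τ ∈ {τ | (m, τ) ∈ D} from h)]
  · simp [restr, Set.indicator_of_notMem h,
      Set.indicator_of_notMem (show τ ∉ {τ | (m, τ) ∈ D} from h)]

lemma measurable_WW (j : ℕ) (lam c d : ℝ) (m : ℤ) :
    Measurable fun τ =>
      ENNReal.ofReal (jap ((m:ℝ)/lam) ^ c * jap (sigL j lam m τ) ^ d) := by
  apply ENNReal.measurable_ofReal.comp
  apply Measurable.const_mul
  have h1 : Continuous fun τ => jap (sigL j lam m τ) := by
    unfold jap sigL
    exact Real.continuous_sqrt.comp (by continuity)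
  exact (h1.rpow_const (fun τ => Or.inl (jap_pos _).ne')).measurable

lemma measurable_abs_sigL (j : ℕ) (lam : ℝ) (m : ℤ) :
    Measurable fun τ => |sigL j lam m τ| := by
  unfold sigL; exact (measurable_id.sub_const _).abs

lemma measSet_D1 (j : ℕ) (lam : ℝ) (m : ℤ) :
    MeasurableSet {τ : ℝ | (m, τ) ∈ D1 j lam} := by
  have hsig := measurable_abs_sigL j lam m
  by_cases hP : 1 ≤ |(m:ℝ)/lam|
  · have h : {τ : ℝ | (m, τ) ∈ D1 j lam} =
        {τ | |sigL j lam m τ| ≤ 2*(2*(j:ℝ)+1)/3 * |(m:ℝ)/lam| ^ (2*j)} := by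
      ext τ; simp [D1, hP]
    rw [h]; exact measurableSet_le hsig measurable_const
  · have h : {τ : ℝ | (m, τ) ∈ D1 j lam} = ∅ := by ext τ; simp [D1, hP]
    rw [h]; exact MeasurableSet.empty

lemma measSet_D2 (j : ℕ) (lam : ℝ) (m : ℤ) :
    MeasurableSet {τ : ℝ | (m, τ) ∈ D2 j lam} := by
  have hsig := measurable_abs_sigL j lam m
  by_cases hP : 1 ≤ |(m:ℝ)/lam|
  · have h : {τ : ℝ | (m, τ) ∈ D2 j lam} =
        {τ | 2*(2*(j:ℝ)+1)/3 * |(m:ℝ)/lam| ^ (2*j) < |sigL j lam m τ|} ∩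
          {τ | |sigL j lam m τ| ≤ 2*(2*(j:ℝ)+1) * |(m:ℝ)/lam| ^ (2*j+1)} := by
      ext τ; simp [D2, hP, Set.mem_inter_iff, and_assoc]
    rw [h]
    exact (measurableSet_lt measurable_const hsig).inter
      (measurableSet_le hsig measurable_const)
  · have h : {τ : ℝ | (m, τ) ∈ D2 j lam} = ∅ := by ext τ; simp [D2, hP]
    rw [h]; exact MeasurableSet.empty

lemma measSet_D5 (j : ℕ) (lam : ℝ) (m : ℤ) :
    MeasurableSet {τ : ℝ | (m, τ) ∈ D5 j lam} := by
  have hsig := measurable_abs_sigL j lam m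
  by_cases hP : 1 / lam ≤ |(m:ℝ)/lam| ∧ |(m:ℝ)/lam| ≤ 1
  · have h : {τ : ℝ | (m, τ) ∈ D5 j lam} =
        {τ | |sigL j lam m τ| ≤ 2*(2*(j:ℝ)+1) * |(m:ℝ)/lam| ^ (2*j+1)} := by
      ext τ; simp only [D5, Set.mem_setOf_eq, hP.1, hP.2, true_and]
    rw [h]; exact measurableSet_le hsig measurable_const
  · have h : {τ : ℝ | (m, τ) ∈ D5 j lam} = ∅ := by
      ext τ
      simp only [D5, Set.mem_setOf_eq, Set.mem_empty_iff_false, iff_false]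
      rintro ⟨h1, h2, -⟩
      exact hP ⟨h1, h2⟩
    rw [h]; exact MeasurableSet.empty

lemma meas_integrand (j : ℕ) (lam c d : ℝ) (f : ℤ → ℝ → ℝ≥0∞)
    (hf : Measurable (Function.uncurry f)) (D : Set (ℤ × ℝ)) (m : ℤ)
    (hD : MeasurableSet {τ : ℝ | (m, τ) ∈ D}) :
    Measurable fun τ =>
      (ENNReal.ofReal (jap ((m:ℝ)/lam) ^ c * jap (sigL j lam m τ) ^ d) *
        restr D f m τ) ^ 2 := by
  have hfm : Measurable (f m) := hf.comp measurable_prodMk_left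
  have hre : restr D f m = Set.indicator {τ | (m, τ) ∈ D} (f m) := restr_apply_eq D f m
  have h2 : Measurable (restr D f m) := by rw [hre]; exact hfm.indicator hD
  exact ((measurable_WW j lam c d m).mul h2).pow_const 2

lemma ennreal_sq_rpow_half (x : ℝ≥0∞) : (x ^ 2) ^ (1/2 : ℝ) = x := by
  rw [← ENNReal.rpow_natCast x 2, ← ENNReal.rpow_mul]
  norm_num

/-- **Lemma 2.5, estimate (2.07):** for `f` supported in `D₁ ∪ D₂`,
`‖u‖_{X^{s,1/2}} ≤ C‖u‖_{Z^s}`. -/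
theorem stmt_11 (j : ℕ) (hj : 2 ≤ j) (s : ℝ)
    (hs₁ : -(j : ℝ) + 1 / 2 ≤ s) (hs₂ : s ≤ -(j : ℝ) / 2) :
    ∃ C : ℝ, 0 < C ∧ ∀ lam : ℝ, 1 ≤ lam → ∀ f : ℤ → ℝ → ℝ≥0∞,
      Measurable (Function.uncurry f) → (∀ τ, f 0 τ = 0) →
      (∀ m τ, (m, τ) ∉ D1 j lam ∪ D2 j lam → f m τ = 0) →
      Xn j lam s (1 / 2 : ℝ) f ≤ ENNReal.ofReal C * Zn j lam s f := by
  have hj2 : (2:ℝ) ≤ (j:ℝ) := by exact_mod_cast hj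
  set A := Real.sqrt (1 + (2*(2*(j:ℝ)+1))^2) with hA_def
  have hA1 : 1 ≤ A := Real.one_le_sqrt.mpr (by nlinarith [sq_nonneg (2*(2*(j:ℝ)+1))])
  have hp : (0:ℝ) ≤ -s - 1/2 := by nlinarith
  set C := A ^ (-s - 1/2) with hC_def
  have hC1 : 1 ≤ C := Real.one_le_rpow hA1 hp
  have hC0 : (0:ℝ) < C := lt_of_lt_of_le one_pos hC1
  refine ⟨C, hC0, ?_⟩
  intro lam hlam f hf hf0 hsupp
  set CC := ENNReal.ofReal C with hCC_def
  have hCCtop : CC ^ 2 ≠ ⊤ := ENNReal.pow_ne_top ENNReal.ofReal_ne_top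
  set b1 := (2 * (j:ℝ) - 1) / (2 * (j:ℝ)) with hb1_def
  set s2 := (1 - 2 * (j:ℝ)) * s - 1 with hs2_def
  set g₁ := restr (D1 j lam ∪ D5 j lam) f with hg1_def
  set g₂ := restr (D2 j lam) f with hg2_def
  have hb1half : (1/2 : ℝ) ≤ b1 := by
    rw [hb1_def, le_div_iff₀ (by positivity)]
    linarith
  -- pointwise estimate
  have hpt : ∀ (m : ℤ) (τ : ℝ),
      (ENNReal.ofReal (jap ((m:ℝ)/lam) ^ s * jap (sigL j lam m τ) ^ (1/2:ℝ)) * f m τ) ^ 2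
      ≤ CC ^ 2 *
        ((ENNReal.ofReal (jap ((m:ℝ)/lam) ^ s * jap (sigL j lam m τ) ^ b1) * g₁ m τ) ^ 2
        + (ENNReal.ofReal (jap ((m:ℝ)/lam) ^ s2 * jap (sigL j lam m τ) ^ (s+1)) * g₂ m τ) ^ 2) := by
    intro m τ
    by_cases h1 : (m, τ) ∈ D1 j lam
    · have hg : g₁ m τ = f m τ :=
        Set.indicator_of_mem (Set.mem_union_left _ h1) _
      have hreal : jap ((m:ℝ)/lam) ^ s * jap (sigL j lam m τ) ^ (1/2:ℝ)
          ≤ C * (jap ((m:ℝ)/lam) ^ s * jap (sigL j lam m τ) ^ b1) := by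
        have hmono : jap (sigL j lam m τ) ^ (1/2:ℝ) ≤ jap (sigL j lam m τ) ^ b1 :=
          Real.rpow_le_rpow_of_exponent_le (one_le_jap _) hb1half
        calc jap ((m:ℝ)/lam) ^ s * jap (sigL j lam m τ) ^ (1/2:ℝ)
            ≤ jap ((m:ℝ)/lam) ^ s * jap (sigL j lam m τ) ^ b1 := by
              apply mul_le_mul_of_nonneg_left hmono (Real.rpow_nonneg (jap_pos _).le _)
          _ ≤ C * (jap ((m:ℝ)/lam) ^ s * jap (sigL j lam m τ) ^ b1) :=
              le_mul_of_one_le_left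
                (mul_nonneg (Real.rpow_nonneg (jap_pos _).le _)
                  (Real.rpow_nonneg (jap_pos _).le _)) hC1
      have hx : ENNReal.ofReal (jap ((m:ℝ)/lam) ^ s * jap (sigL j lam m τ) ^ (1/2:ℝ)) * f m τ
          ≤ CC * (ENNReal.ofReal (jap ((m:ℝ)/lam) ^ s * jap (sigL j lam m τ) ^ b1) * g₁ m τ) := by
        rw [hg]
        calc ENNReal.ofReal (jap ((m:ℝ)/lam) ^ s * jap (sigL j lam m τ) ^ (1/2:ℝ)) * f m τ
            ≤ ENNReal.ofReal (C * (jap ((m:ℝ)/lam) ^ s * jap (sigL j lam m τ) ^ b1)) * f m τ :=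
              mul_le_mul_left (ENNReal.ofReal_le_ofReal hreal) _
          _ = _ := by rw [ENNReal.ofReal_mul hC0.le, mul_assoc]
      calc _ ≤ (CC * (ENNReal.ofReal (jap ((m:ℝ)/lam) ^ s * jap (sigL j lam m τ) ^ b1) * g₁ m τ)) ^ 2 :=
            pow_le_pow_left' hx 2
        _ = CC ^ 2 * (ENNReal.ofReal (jap ((m:ℝ)/lam) ^ s * jap (sigL j lam m τ) ^ b1) * g₁ m τ) ^ 2 :=
            mul_pow _ _ 2
        _ ≤ _ := mul_le_mul_right le_self_add _
    · by_cases h2 : (m, τ) ∈ D2 j lam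
      · have hg : g₂ m τ = f m τ := Set.indicator_of_mem h2 _
        have hσ : |sigL j lam m τ| ≤ 2*(2*(j:ℝ)+1) * |(m:ℝ)/lam| ^ (2*j+1) := h2.2.2
        have hreal : jap ((m:ℝ)/lam) ^ s * jap (sigL j lam m τ) ^ (1/2:ℝ)
            ≤ C * (jap ((m:ℝ)/lam) ^ s2 * jap (sigL j lam m τ) ^ (s+1)) :=
          keyD2 j hs₁ hσ hp
        have hx : ENNReal.ofReal (jap ((m:ℝ)/lam) ^ s * jap (sigL j lam m τ) ^ (1/2:ℝ)) * f m τ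
            ≤ CC * (ENNReal.ofReal (jap ((m:ℝ)/lam) ^ s2 * jap (sigL j lam m τ) ^ (s+1)) * g₂ m τ) := by
          rw [hg]
          calc ENNReal.ofReal (jap ((m:ℝ)/lam) ^ s * jap (sigL j lam m τ) ^ (1/2:ℝ)) * f m τ
              ≤ ENNReal.ofReal (C * (jap ((m:ℝ)/lam) ^ s2 * jap (sigL j lam m τ) ^ (s+1))) * f m τ :=
                mul_le_mul_left (ENNReal.ofReal_le_ofReal hreal) _
            _ = _ := by rw [ENNReal.ofReal_mul hC0.le, mul_assoc]
        calc _ ≤ (CC * (ENNReal.ofReal (jap ((m:ℝ)/lam) ^ s2 * jap (sigL j lam m τ) ^ (s+1)) * g₂ m τ)) ^ 2 :=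
              pow_le_pow_left' hx 2
          _ = CC ^ 2 * (ENNReal.ofReal (jap ((m:ℝ)/lam) ^ s2 * jap (sigL j lam m τ) ^ (s+1)) * g₂ m τ) ^ 2 :=
              mul_pow _ _ 2
          _ ≤ _ := mul_le_mul_right le_add_self _
      · have hz : f m τ = 0 := by
          apply hsupp
          intro hmem
          rcases hmem with h | h
          · exact h1 h
          · exact h2 h
        simp [hz]
  -- measurability of the two integrands
  have hH1 : ∀ m : ℤ, Measurable fun τ =>
      (ENNReal.ofReal (jap ((m:ℝ)/lam) ^ s * jap (sigL j lam m τ) ^ b1) * g₁ m τ) ^ 2 := by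
    intro m
    apply meas_integrand j lam s b1 f hf (D1 j lam ∪ D5 j lam) m
    exact (measSet_D1 j lam m).union (measSet_D5 j lam m)
  -- the main chain
  simp only [Xn, L2L]
  have hT : (∑' m : ℤ, ∫⁻ τ,
        (ENNReal.ofReal (jap ((m:ℝ)/lam) ^ s * jap (sigL j lam m τ) ^ (1/2:ℝ)) * f m τ) ^ 2)
      ≤ CC ^ 2 *
        ((∑' m : ℤ, ∫⁻ τ,
            (ENNReal.ofReal (jap ((m:ℝ)/lam) ^ s * jap (sigL j lam m τ) ^ b1) * g₁ m τ) ^ 2)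
        + (∑' m : ℤ, ∫⁻ τ,
            (ENNReal.ofReal (jap ((m:ℝ)/lam) ^ s2 * jap (sigL j lam m τ) ^ (s+1)) * g₂ m τ) ^ 2)) := by
    calc _ ≤ ∑' m : ℤ, ∫⁻ τ, CC ^ 2 *
          ((ENNReal.ofReal (jap ((m:ℝ)/lam) ^ s * jap (sigL j lam m τ) ^ b1) * g₁ m τ) ^ 2
          + (ENNReal.ofReal (jap ((m:ℝ)/lam) ^ s2 * jap (sigL j lam m τ) ^ (s+1)) * g₂ m τ) ^ 2) :=
        Summable.tsum_le_tsum (fun m => lintegral_mono fun τ => hpt m τ)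
          ENNReal.summable ENNReal.summable
      _ = ∑' m : ℤ, CC ^ 2 *
          ((∫⁻ τ, (ENNReal.ofReal (jap ((m:ℝ)/lam) ^ s * jap (sigL j lam m τ) ^ b1) * g₁ m τ) ^ 2)
          + ∫⁻ τ, (ENNReal.ofReal (jap ((m:ℝ)/lam) ^ s2 * jap (sigL j lam m τ) ^ (s+1)) * g₂ m τ) ^ 2) := by
        refine tsum_congr fun m => ?_
        rw [lintegral_const_mul' _ _ hCCtop, lintegral_add_left (hH1 m)]
      _ = _ := by rw [ENNReal.tsum_mul_left, ENNReal.tsum_add]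
  calc (ENNReal.ofReal (1/lam) * ∑' m : ℤ, ∫⁻ τ,
        (ENNReal.ofReal (jap ((m:ℝ)/lam) ^ s * jap (sigL j lam m τ) ^ (1/2:ℝ)) * f m τ) ^ 2) ^ (1/2:ℝ)
      ≤ (CC ^ 2 *
        (ENNReal.ofReal (1/lam) * (∑' m : ℤ, ∫⁻ τ,
            (ENNReal.ofReal (jap ((m:ℝ)/lam) ^ s * jap (sigL j lam m τ) ^ b1) * g₁ m τ) ^ 2)
        + ENNReal.ofReal (1/lam) * (∑' m : ℤ, ∫⁻ τ,
            (ENNReal.ofReal (jap ((m:ℝ)/lam) ^ s2 * jap (sigL j lam m τ) ^ (s+1)) * g₂ m τ) ^ 2))) ^ (1/2:ℝ) := by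
        apply ENNReal.rpow_le_rpow _ (by norm_num)
        calc _ ≤ ENNReal.ofReal (1/lam) * (CC ^ 2 * _) := mul_le_mul_right hT _
          _ = _ := by ring
    _ = CC * (ENNReal.ofReal (1/lam) * (∑' m : ℤ, ∫⁻ τ,
            (ENNReal.ofReal (jap ((m:ℝ)/lam) ^ s * jap (sigL j lam m τ) ^ b1) * g₁ m τ) ^ 2)
        + ENNReal.ofReal (1/lam) * (∑' m : ℤ, ∫⁻ τ,
            (ENNReal.ofReal (jap ((m:ℝ)/lam) ^ s2 * jap (sigL j lam m τ) ^ (s+1)) * g₂ m τ) ^ 2)) ^ (1/2:ℝ) := by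
        rw [ENNReal.mul_rpow_of_nonneg _ _ (by norm_num : (0:ℝ) ≤ 1/2), ennreal_sq_rpow_half]
    _ ≤ CC * ((ENNReal.ofReal (1/lam) * (∑' m : ℤ, ∫⁻ τ,
            (ENNReal.ofReal (jap ((m:ℝ)/lam) ^ s * jap (sigL j lam m τ) ^ b1) * g₁ m τ) ^ 2)) ^ (1/2:ℝ)
        + (ENNReal.ofReal (1/lam) * (∑' m : ℤ, ∫⁻ τ,
            (ENNReal.ofReal (jap ((m:ℝ)/lam) ^ s2 * jap (sigL j lam m τ) ^ (s+1)) * g₂ m τ) ^ 2)) ^ (1/2:ℝ)) := by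
        apply mul_le_mul_right
        exact ENNReal.rpow_add_le_add_rpow _ _ (by norm_num) (by norm_num)
    _ ≤ CC * Zn j lam s f := by
        apply mul_le_mul_right
        have h1 : (ENNReal.ofReal (1/lam) * (∑' m : ℤ, ∫⁻ τ,
              (ENNReal.ofReal (jap ((m:ℝ)/lam) ^ s * jap (sigL j lam m τ) ^ b1) * g₁ m τ) ^ 2)) ^ (1/2:ℝ)
            = Xn j lam s b1 g₁ := by simp only [Xn, L2L]
        have h2 : (ENNReal.ofReal (1/lam) * (∑' m : ℤ, ∫⁻ τ,
              (ENNReal.ofReal (jap ((m:ℝ)/lam) ^ s2 * jap (sigL j lam m τ) ^ (s+1)) * g₂ m τ) ^ 2)) ^ (1/2:ℝ)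
            = Xn j lam s2 (s+1) g₂ := by simp only [Xn, L2L]
        rw [h1, h2, Zn, XSn, hb1_def, hs2_def, hg1_def, hg2_def]
        exact le_trans le_self_add le_self_add

end
end
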